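/- arXiv:1305.3336 — 8 statements merged into one kernel-verified Lean document; each statement's English description precedes it below -/
import Mathlib

section
/- Let T be a laminar data set over an n × n strategy space that satisfies the uniqueness property. Then there exists an n×n real matrix A such that the zero-sum game (A,−A) rationalizes T and, moreover, for every observation ((i,j),I,J) ∈ T, the profile (i,j) is the unique pure Nash equilibrium of the subgame (I,J) in the game (A,−A). -/
/-- An observation: an observed choice `(i,j)` together with a subgame `(I,J)`. -/
abbrev Obs (n : ℕ) := (Fin n × Fin n) × Finset (Fin n) × Finset (Fin n)

/-- `T` is a (well-formed) data set: each observed choice lies in its subgame. -/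
def IsDataset {n : ℕ} (T : Finset (Obs n)) : Prop :=
  ∀ o ∈ T, o.1.1 ∈ o.2.1 ∧ o.1.2 ∈ o.2.2

/-- `(i,j)` is a strict Nash equilibrium of the subgame `(I,J)` of the bimatrix game `(A,B)`:
`A i j > A i' j` for all other `i' ∈ I` and `B i j > B i j'` for all other `j' ∈ J`. -/
def StrictNash {n : ℕ} (A B : Matrix (Fin n) (Fin n) ℝ)
    (I J : Finset (Fin n)) (i j : Fin n) : Prop :=
  i ∈ I ∧ j ∈ J ∧ (∀ i' ∈ I, i' ≠ i → A i' j < A i j) ∧ (∀ j' ∈ J, j' ≠ j → B i j' < B i j)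

/-- The bimatrix game `(A,B)` rationalizes the data set `T`: every observed choice is a
strict Nash equilibrium of its subgame. -/
def Rationalizes {n : ℕ} (A B : Matrix (Fin n) (Fin n) ℝ) (T : Finset (Obs n)) : Prop :=
  ∀ o ∈ T, StrictNash A B o.2.1 o.2.2 o.1.1 o.1.2

/-- The data set `T` is rationalizable by some bimatrix game. -/
def Rationalizable {n : ℕ} (T : Finset (Obs n)) : Prop :=
  ∃ A B : Matrix (Fin n) (Fin n) ℝ, Rationalizes A B T

/-- `(i,j)` is a pure Nash equilibrium of the subgame `(I,J)` of `(A,B)` (weak inequalities). -/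
def PureNash {n : ℕ} (A B : Matrix (Fin n) (Fin n) ℝ)
    (I J : Finset (Fin n)) (i j : Fin n) : Prop :=
  i ∈ I ∧ j ∈ J ∧ (∀ i' ∈ I, A i' j ≤ A i j) ∧ (∀ j' ∈ J, B i j' ≤ B i j)

/-- Two subgames `(I,J)` and `(I',J')` cross: `(I×J) ∩ (I'×J') ≠ ∅` but neither product
set contains the other. -/
def Cross {n : ℕ} (S S' : Finset (Fin n) × Finset (Fin n)) : Prop :=
  ((S.1 ×ˢ S.2) ∩ (S'.1 ×ˢ S'.2)).Nonempty ∧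
    ¬ (S.1 ×ˢ S.2 ⊆ S'.1 ×ˢ S'.2) ∧ ¬ (S'.1 ×ˢ S'.2 ⊆ S.1 ×ˢ S.2)

/-- A data set is laminar if no two of its subgames cross. -/
def Laminar {n : ℕ} (T : Finset (Obs n)) : Prop :=
  ∀ o ∈ T, ∀ o' ∈ T, ¬ Cross o.2 o'.2

/-- The uniqueness property: every subgame appearing in `T` has exactly one observed choice,
and whenever `((i,j),I,J), ((i',j'),I',J') ∈ T` with `I'×J' ⊆ I×J` and `(i,j) ∈ I'×J'`,
then `(i',j') = (i,j)`. -/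
def UniqueProp {n : ℕ} (T : Finset (Obs n)) : Prop :=
  (∀ o ∈ T, ∀ o' ∈ T, o.2 = o'.2 → o.1 = o'.1) ∧
  (∀ o ∈ T, ∀ o' ∈ T, o'.2.1 ×ˢ o'.2.2 ⊆ o.2.1 ×ˢ o.2.2 →
      o.1 ∈ o'.2.1 ×ˢ o'.2.2 → o'.1 = o.1)

namespace LamZS

open Finset

variable {n : ℕ}

/-- The product set (cells) of an observation's subgame. -/
def Pr (o : Obs n) : Finset (Fin n × Fin n) := o.2.1 ×ˢ o.2.2

lemma mem_Pr {o : Obs n} {c : Fin n × Fin n} : c ∈ Pr o ↔ c.1 ∈ o.2.1 ∧ c.2 ∈ o.2.2 :=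
  Finset.mem_product

lemma pr_subset {o o' : Obs n} (hne : (Pr o).Nonempty) (h : Pr o ⊆ Pr o') :
    o.2.1 ⊆ o'.2.1 ∧ o.2.2 ⊆ o'.2.2 := by
  obtain ⟨c, hc⟩ := hne
  rw [mem_Pr] at hc
  refine ⟨fun i hi => ?_, fun j hj => ?_⟩
  · have h1 : ((i, c.2) : Fin n × Fin n) ∈ Pr o := mem_Pr.mpr ⟨hi, hc.2⟩
    exact (mem_Pr.mp (h h1)).1
  · have h1 : ((c.1, j) : Fin n × Fin n) ∈ Pr o := mem_Pr.mpr ⟨hc.1, hj⟩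
    exact (mem_Pr.mp (h h1)).2

/-- The inequality constraints imposed by a single observation on the payoff matrix of a
zero-sum game. -/
def Constr (A : Matrix (Fin n) (Fin n) ℝ) (o : Obs n) : Prop :=
  (∀ i' ∈ o.2.1, i' ≠ o.1.1 → A i' o.1.2 < A o.1.1 o.1.2) ∧
  (∀ j' ∈ o.2.2, j' ≠ o.1.2 → A o.1.1 o.1.2 < A o.1.1 j')

/-- The (maximal) block containing cell `c` below root `t0` meets column `t0.1.2`. -/
def Cp (S : Finset (Obs n)) (t0 : Obs n) (c : Fin n × Fin n) : Prop :=
  c.2 = t0.1.2 ∨ ∃ t ∈ S, c ∈ Pr t ∧ Pr t ⊆ Pr t0 ∧ t ≠ t0 ∧ t0.1.2 ∈ t.2.2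

/-- The (maximal) block containing cell `c` below root `t0` meets row `t0.1.1`. -/
def Rp (S : Finset (Obs n)) (t0 : Obs n) (c : Fin n × Fin n) : Prop :=
  c.1 = t0.1.1 ∨ ∃ t ∈ S, c ∈ Pr t ∧ Pr t ⊆ Pr t0 ∧ t ≠ t0 ∧ t0.1.1 ∈ t.2.1

open Classical in
/-- The offset value of a cell under root `t0`. -/
noncomputable def av (S : Finset (Obs n)) (t0 : Obs n) (c : Fin n × Fin n) : ℝ :=
  if Cp S t0 c ∧ ¬ Rp S t0 c then -(2/5)
  else if Rp S t0 c ∧ ¬ Cp S t0 c then 2/5 else 0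

/-- `t0` is the maximal observation of `S` whose product contains `c`. -/
def IsTop (S : Finset (Obs n)) (t0 : Obs n) (c : Fin n × Fin n) : Prop :=
  t0 ∈ S ∧ c ∈ Pr t0 ∧ ∀ t ∈ S, c ∈ Pr t → Pr t ⊆ Pr t0

open Classical in
/-- The recursive construction: offset plus a scaled copy of the solution for the
non-maximal observations. -/
noncomputable def bigA (S : Finset (Obs n)) (A' : Matrix (Fin n) (Fin n) ℝ) :
    Matrix (Fin n) (Fin n) ℝ :=
  Matrix.of fun p q =>
    if h : ∃ t0, IsTop S t0 (p, q) then av S (Classical.choose h) (p, q) + (1/5) * A' p q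
    else 0

lemma av_abs_le (S : Finset (Obs n)) (t0 : Obs n) (c : Fin n × Fin n) :
    |av S t0 c| ≤ 2/5 := by
  unfold av; split_ifs <;> rw [abs_le] <;> norm_num

lemma av_eq_zero {S : Finset (Obs n)} {t0 : Obs n} {c : Fin n × Fin n}
    (hc : Cp S t0 c) (hr : Rp S t0 c) : av S t0 c = 0 := by
  classical
  unfold av
  rw [if_neg (by tauto), if_neg (by tauto)]

lemma av_eq_neg {S : Finset (Obs n)} {t0 : Obs n} {c : Fin n × Fin n}
    (hc : Cp S t0 c) (hr : ¬ Rp S t0 c) : av S t0 c = -(2/5) := by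
  classical
  unfold av
  rw [if_pos ⟨hc, hr⟩]

lemma av_eq_pos {S : Finset (Obs n)} {t0 : Obs n} {c : Fin n × Fin n}
    (hr : Rp S t0 c) (hc : ¬ Cp S t0 c) : av S t0 c = 2/5 := by
  classical
  unfold av
  rw [if_neg (by tauto), if_pos ⟨hr, hc⟩]

lemma av_congr {S : Finset (Obs n)} {t0 : Obs n} {c c' : Fin n × Fin n}
    (h1 : Cp S t0 c ↔ Cp S t0 c') (h2 : Rp S t0 c ↔ Rp S t0 c') :
    av S t0 c = av S t0 c' := by
  classical
  unfold av
  exact if_congr (and_congr h1 (not_congr h2)) rfl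
    (if_congr (and_congr h2 (not_congr h1)) rfl rfl)

lemma bigA_eq {S : Finset (Obs n)} {A' : Matrix (Fin n) (Fin n) ℝ}
    (heq : ∀ o ∈ S, ∀ o' ∈ S, Pr o = Pr o' → o = o')
    {t0 : Obs n} {p q : Fin n} (h : IsTop S t0 (p, q)) :
    bigA S A' p q = av S t0 (p, q) + (1/5) * A' p q := by
  classical
  have hex : ∃ t, IsTop S t (p, q) := ⟨t0, h⟩
  have hsp := Classical.choose_spec hex
  have hch : Classical.choose hex = t0 :=
    heq _ hsp.1 _ h.1 (subset_antisymm (h.2.2 _ hsp.1 hsp.2.1) (hsp.2.2 _ h.1 h.2.1))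
  simp only [bigA, Matrix.of_apply]
  rw [dif_pos hex, hch]

lemma bigA_eq_zero {S : Finset (Obs n)} {A' : Matrix (Fin n) (Fin n) ℝ}
    {p q : Fin n} (h : ¬ ∃ t0, IsTop S t0 (p, q)) : bigA S A' p q = 0 := by
  classical
  simp only [bigA, Matrix.of_apply]
  rw [dif_neg h]

/-- The key recursive existence lemma. -/
lemma key (m : ℕ) : ∀ S : Finset (Obs n), S.card ≤ m →
    (∀ o ∈ S, o.1 ∈ Pr o) →
    (∀ o ∈ S, ∀ o' ∈ S, ∀ c : Fin n × Fin n,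
        c ∈ Pr o → c ∈ Pr o' → Pr o ⊆ Pr o' ∨ Pr o' ⊆ Pr o) →
    (∀ o ∈ S, ∀ o' ∈ S, Pr o = Pr o' → o = o') →
    (∀ o ∈ S, ∀ o' ∈ S, Pr o' ⊆ Pr o → o.1 ∈ Pr o' → o'.1 = o.1) →
    ∃ A : Matrix (Fin n) (Fin n) ℝ, (∀ p q, |A p q| < 1) ∧ ∀ o ∈ S, Constr A o := by
  induction m with
  | zero =>
    intro S hcard _ _ _ _
    have hS : S = ∅ := Finset.card_eq_zero.mp (Nat.le_zero.mp hcard)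
    exact ⟨0, fun p q => by simp, by simp [hS]⟩
  | succ m ih =>
    intro S hcard hmem hchain heq hun
    classical
    by_cases hS : S = ∅
    · exact ⟨0, fun p q => by simp, by simp [hS]⟩
    -- existence of tops
    have hmax_ex : ∀ c : Fin n × Fin n, (∃ t ∈ S, c ∈ Pr t) → ∃ t0, IsTop S t0 c := by
      intro c hc
      obtain ⟨t, ht, htc⟩ := hc
      obtain ⟨t0, ht0, hmax⟩ := Finset.exists_max_image
        (S.filter fun t => c ∈ Pr t) (fun t => (Pr t).card)
        ⟨t, Finset.mem_filter.mpr ⟨ht, htc⟩⟩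
      obtain ⟨ht0S, ht0c⟩ := Finset.mem_filter.mp ht0
      refine ⟨t0, ht0S, ht0c, fun t' ht' ht'c => ?_⟩
      rcases hchain t' ht' t0 ht0S c ht'c ht0c with h1 | h1
      · exact h1
      · have := hmax t' (Finset.mem_filter.mpr ⟨ht', ht'c⟩)
        rw [Finset.eq_of_subset_of_card_le h1 this]
    have hTopMxl : ∀ (t0 : Obs n) (c : Fin n × Fin n), IsTop S t0 c →
        ∀ t' ∈ S, Pr t0 ⊆ Pr t' → t' = t0 := by
      intro t0 c h t' ht' hsub
      exact heq t' ht' t0 h.1 (subset_antisymm (h.2.2 t' ht' (hsub h.2.1)) hsub)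
    -- the set of non-maximal observations
    set Smin : Finset (Obs n) :=
      S.filter (fun t => ¬ ∀ t' ∈ S, Pr t ⊆ Pr t' → t' = t) with hSmin
    have hSminsub : Smin ⊆ S := Finset.filter_subset _ _
    -- Smin is strictly smaller
    obtain ⟨tm, htmS⟩ := Finset.nonempty_iff_ne_empty.mpr hS
    obtain ⟨t0m, ht0m⟩ := hmax_ex tm.1 ⟨tm, htmS, hmem tm htmS⟩
    have hMx0 : ∀ t' ∈ S, Pr t0m ⊆ Pr t' → t' = t0m := hTopMxl t0m tm.1 ht0m
    have hssub : Smin ⊂ S := by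
      refine (Finset.ssubset_iff_of_subset hSminsub).mpr ⟨t0m, ht0m.1, fun hmem' => ?_⟩
      exact (Finset.mem_filter.mp hmem').2 hMx0
    have hcard' : Smin.card ≤ m :=
      Nat.lt_succ_iff.mp (lt_of_lt_of_le (Finset.card_lt_card hssub) hcard)
    obtain ⟨A', hA'bd, hA'con⟩ := ih Smin hcard'
      (fun o ho => hmem o (hSminsub ho))
      (fun o ho o' ho' => hchain o (hSminsub ho) o' (hSminsub ho'))
      (fun o ho o' ho' => heq o (hSminsub ho) o' (hSminsub ho'))
      (fun o ho o' ho' => hun o (hSminsub ho) o' (hSminsub ho'))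
    refine ⟨bigA S A', ?_, ?_⟩
    · -- bounds
      intro p q
      by_cases h : ∃ t0, IsTop S t0 (p, q)
      · obtain ⟨t0, ht0⟩ := h
        rw [bigA_eq heq ht0]
        have h1 : |av S t0 (p, q)| ≤ 2/5 := av_abs_le S t0 (p, q)
        have h2 : |A' p q| < 1 := hA'bd p q
        have h3 : |(1/5 : ℝ) * A' p q| = (1/5) * |A' p q| := by
          rw [abs_mul]; norm_num
        have h4 := abs_add_le (av S t0 (p, q)) ((1/5) * A' p q)
        linarith
      · rw [bigA_eq_zero h]; norm_num
    · -- constraints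
      intro t1 ht1
      by_cases hM : ∀ t' ∈ S, Pr t1 ⊆ Pr t' → t' = t1
      · -- t1 is maximal: it is the top of all its own cells
        have htop : ∀ c ∈ Pr t1, IsTop S t1 c := by
          intro c hc
          refine ⟨ht1, hc, fun t ht htc => ?_⟩
          rcases hchain t ht t1 ht1 c htc hc with h1 | h1
          · exact h1
          · rw [hM t ht h1]
        have hc0 : t1.1 ∈ Pr t1 := hmem t1 ht1
        have hCol0 : Cp S t1 t1.1 := Or.inl rfl
        have hRow0 : Rp S t1 t1.1 := Or.inl rfl
        have hav0 : av S t1 t1.1 = 0 := av_eq_zero hCol0 hRow0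
        have htop0 : IsTop S t1 (t1.1.1, t1.1.2) := htop t1.1 hc0
        constructor
        · -- column constraint
          intro i' hi' hne
          have hc : ((i' : Fin n), t1.1.2) ∈ Pr t1 := mem_Pr.mpr ⟨hi', (mem_Pr.mp hc0).2⟩
          rw [bigA_eq heq (htop _ hc), bigA_eq heq htop0]
          have hCol : Cp S t1 (i', t1.1.2) := Or.inl rfl
          by_cases hR : Rp S t1 (i', t1.1.2)
          · -- cell lies in a sub-block containing t1.1
            obtain ⟨t, htS, hct, hsub, htne, hi1t⟩ := hR.resolve_left hne
            have hj1t : t1.1.2 ∈ t.2.2 := (mem_Pr.mp hct).2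
            have hc0t : t1.1 ∈ Pr t := mem_Pr.mpr ⟨hi1t, hj1t⟩
            have hchoice : t.1 = t1.1 := hun t1 ht1 t htS hsub hc0t
            have htSmin : t ∈ Smin := by
              rw [hSmin, Finset.mem_filter]
              exact ⟨htS, fun hMx => htne (hMx t1 ht1 hsub).symm⟩
            have hlt := (hA'con t htSmin).1 i' (mem_Pr.mp hct).1
              (by rw [hchoice]; exact hne)
            rw [hchoice] at hlt
            rw [av_eq_zero hCol hR, hav0]
            linarith
          · rw [av_eq_neg hCol hR, hav0]
            have h1 := abs_lt.mp (hA'bd i' t1.1.2)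
            have h2 := abs_lt.mp (hA'bd t1.1.1 t1.1.2)
            linarith
        · -- row constraint
          intro j' hj' hne
          have hc : ((t1.1.1 : Fin n), j') ∈ Pr t1 := mem_Pr.mpr ⟨(mem_Pr.mp hc0).1, hj'⟩
          rw [bigA_eq heq (htop _ hc), bigA_eq heq htop0]
          have hRow : Rp S t1 (t1.1.1, j') := Or.inl rfl
          by_cases hC : Cp S t1 (t1.1.1, j')
          · obtain ⟨t, htS, hct, hsub, htne, hj1t⟩ := hC.resolve_left hne
            have hi1t : t1.1.1 ∈ t.2.1 := (mem_Pr.mp hct).1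
            have hc0t : t1.1 ∈ Pr t := mem_Pr.mpr ⟨hi1t, hj1t⟩
            have hchoice : t.1 = t1.1 := hun t1 ht1 t htS hsub hc0t
            have htSmin : t ∈ Smin := by
              rw [hSmin, Finset.mem_filter]
              exact ⟨htS, fun hMx => htne (hMx t1 ht1 hsub).symm⟩
            have hlt := (hA'con t htSmin).2 j' (mem_Pr.mp hct).2
              (by rw [hchoice]; exact hne)
            rw [hchoice] at hlt
            rw [av_eq_zero hC hRow, hav0]
            linarith
          · rw [av_eq_pos hRow hC, hav0]
            have h1 := abs_lt.mp (hA'bd t1.1.1 j')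
            have h2 := abs_lt.mp (hA'bd t1.1.1 t1.1.2)
            linarith
      · -- t1 is not maximal
        have ht1Smin : t1 ∈ Smin := by rw [hSmin, Finset.mem_filter]; exact ⟨ht1, hM⟩
        obtain ⟨t0, ht0⟩ := hmax_ex t1.1 ⟨t1, ht1, hmem t1 ht1⟩
        have hsub10 : Pr t1 ⊆ Pr t0 := ht0.2.2 t1 ht1 (hmem t1 ht1)
        have ht0ne : t1 ≠ t0 := by
          intro h
          exact hM (fun t' ht' hs => by
            rw [h] at hs ⊢
            exact hTopMxl t0 t1.1 ht0 t' ht' hs)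
        have htopc : ∀ c ∈ Pr t1, IsTop S t0 c := by
          intro c hc
          refine ⟨ht0.1, hsub10 hc, fun t ht htc => ?_⟩
          rcases hchain t ht t1 ht1 c htc hc with h1 | h1
          · exact h1.trans hsub10
          · exact ht0.2.2 t ht (h1 (hmem t1 ht1))
        have hCiff : ∀ c ∈ Pr t1, ∀ c' ∈ Pr t1, Cp S t0 c → Cp S t0 c' := by
          intro c hc c' hc' h
          rcases h with h | ⟨t, htS, hct, hsub, htne, hj⟩
          · exact Or.inr ⟨t1, ht1, hc', hsub10, ht0ne, by rw [← h]; exact (mem_Pr.mp hc).2⟩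
          · rcases hchain t htS t1 ht1 c hct hc with h1 | h1
            · exact Or.inr ⟨t1, ht1, hc', hsub10, ht0ne, (pr_subset ⟨c, hct⟩ h1).2 hj⟩
            · exact Or.inr ⟨t, htS, h1 hc', hsub, htne, hj⟩
        have hRiff : ∀ c ∈ Pr t1, ∀ c' ∈ Pr t1, Rp S t0 c → Rp S t0 c' := by
          intro c hc c' hc' h
          rcases h with h | ⟨t, htS, hct, hsub, htne, hi⟩
          · exact Or.inr ⟨t1, ht1, hc', hsub10, ht0ne, by rw [← h]; exact (mem_Pr.mp hc).1⟩
          · rcases hchain t htS t1 ht1 c hct hc with h1 | h1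
            · exact Or.inr ⟨t1, ht1, hc', hsub10, ht0ne, (pr_subset ⟨c, hct⟩ h1).1 hi⟩
            · exact Or.inr ⟨t, htS, h1 hc', hsub, htne, hi⟩
        have havc : ∀ c ∈ Pr t1, ∀ c' ∈ Pr t1, av S t0 c = av S t0 c' := by
          intro c hc c' hc'
          exact av_congr ⟨hCiff c hc c' hc', hCiff c' hc' c hc⟩
            ⟨hRiff c hc c' hc', hRiff c' hc' c hc⟩
        have hc0 : t1.1 ∈ Pr t1 := hmem t1 ht1
        have hcon := hA'con t1 ht1Smin
        constructor
        · intro i' hi' hne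
          have hc : ((i' : Fin n), t1.1.2) ∈ Pr t1 := mem_Pr.mpr ⟨hi', (mem_Pr.mp hc0).2⟩
          rw [bigA_eq heq (htopc _ hc), bigA_eq heq (htopc t1.1 hc0)]
          rw [havc _ hc _ hc0]
          have hlt := hcon.1 i' hi' hne
          linarith
        · intro j' hj' hne
          have hc : ((t1.1.1 : Fin n), j') ∈ Pr t1 := mem_Pr.mpr ⟨(mem_Pr.mp hc0).1, hj'⟩
          rw [bigA_eq heq (htopc _ hc), bigA_eq heq (htopc t1.1 hc0)]
          rw [havc _ hc0 _ hc]
          have hlt := hcon.2 j' hj' hne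
          linarith

/-- Interchangeability: in a zero-sum game any pure Nash coincides with a strict Nash. -/
lemma interchange {A : Matrix (Fin n) (Fin n) ℝ} {I J : Finset (Fin n)} {i j i' j' : Fin n}
    (hs : StrictNash A (-A) I J i j) (hp : PureNash A (-A) I J i' j') :
    (i', j') = (i, j) := by
  obtain ⟨hiI, hjJ, hs1, hs2⟩ := hs
  obtain ⟨hiI', hjJ', hp1, hp2⟩ := hp
  have hp2' : ∀ q ∈ J, A i' j' ≤ A i' q := fun q hq => by
    have := hp2 q hq; simp only [Matrix.neg_apply] at this; linarith
  have hs2' : ∀ q ∈ J, q ≠ j → A i j < A i q := fun q hq hne => by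
    have := hs2 q hq hne; simp only [Matrix.neg_apply] at this; linarith
  have hjj : j' = j := by
    by_contra hne
    have h1 : A i j < A i j' := hs2' j' hjJ' hne
    have h2 : A i j' ≤ A i' j' := hp1 i hiI
    have h3 : A i' j' ≤ A i' j := hp2' j hjJ
    by_cases hii : i' = i
    · subst hii; linarith
    · have h4 : A i' j < A i j := hs1 i' hiI' hii
      linarith
  subst hjj
  have hii : i' = i := by
    by_contra hii
    have h4 : A i' j' < A i j' := hs1 i' hiI' hii
    have h2 : A i j' ≤ A i' j' := hp1 i hiI
    linarith
  subst hii
  rfl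

end LamZS

open LamZS in
/-- If `T` is a laminar data set satisfying the uniqueness property, then
there is a matrix `A` such that the zero-sum game `(A,-A)` rationalizes `T` and, for every
observation `((i,j),I,J) ∈ T`, the profile `(i,j)` is the unique pure Nash equilibrium of
the subgame `(I,J)` in `(A,-A)`. -/
theorem laminar_zero_sum_rationalization (n : ℕ) (T : Finset (Obs n)) (hT : IsDataset T)
    (hlam : Laminar T) (huniq : UniqueProp T) :
    ∃ A : Matrix (Fin n) (Fin n) ℝ, Rationalizes A (-A) T ∧
      ∀ o ∈ T, ∀ i' ∈ o.2.1, ∀ j' ∈ o.2.2,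
        PureNash A (-A) o.2.1 o.2.2 i' j' → (i', j') = o.1 := by
  classical
  have hmem : ∀ o ∈ T, o.1 ∈ Pr o := fun o ho => mem_Pr.mpr ⟨(hT o ho).1, (hT o ho).2⟩
  have hchain : ∀ o ∈ T, ∀ o' ∈ T, ∀ c : Fin n × Fin n,
      c ∈ Pr o → c ∈ Pr o' → Pr o ⊆ Pr o' ∨ Pr o' ⊆ Pr o := by
    intro o ho o' ho' c hc hc'
    by_contra h
    push_neg at h
    exact hlam o ho o' ho' ⟨⟨c, Finset.mem_inter.mpr ⟨hc, hc'⟩⟩, h.1, h.2⟩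
  have heqp : ∀ o ∈ T, ∀ o' ∈ T, Pr o = Pr o' → o = o' := by
    intro o ho o' ho' h
    have h1 := pr_subset ⟨o.1, hmem o ho⟩ (by rw [h] : Pr o ⊆ Pr o')
    have h2 := pr_subset ⟨o'.1, hmem o' ho'⟩ (by rw [h] : Pr o' ⊆ Pr o)
    have h2eq : o.2 = o'.2 :=
      Prod.ext (subset_antisymm h1.1 h2.1) (subset_antisymm h1.2 h2.2)
    exact Prod.ext (huniq.1 o ho o' ho' h2eq) h2eq
  have hun : ∀ o ∈ T, ∀ o' ∈ T, Pr o' ⊆ Pr o → o.1 ∈ Pr o' → o'.1 = o.1 :=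
    fun o ho o' ho' => huniq.2 o ho o' ho'
  obtain ⟨A, hbd, hcon⟩ := key T.card T le_rfl hmem hchain heqp hun
  have hrat : Rationalizes A (-A) T := by
    intro o ho
    refine ⟨(hT o ho).1, (hT o ho).2, (hcon o ho).1, fun j' hj' hne => ?_⟩
    simp only [Matrix.neg_apply]
    exact neg_lt_neg ((hcon o ho).2 j' hj' hne)
  refine ⟨A, hrat, fun o ho i' hi' j' hj' hp => ?_⟩
  exact interchange (hrat o ho) hp
end

section
/- Let T be a data set over an n × n strategy space and let G be a revealed-preference graph that implements T and is acyclic. Then there exists an n×n real matrix A such that the zero-sum game (A,−A) rationalizes T. -/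
/-- A directed graph (given by its edge relation) has no directed cycle. -/
def Acyclic {V : Type*} (G : V → V → Prop) : Prop :=
  ∀ v, ¬ Relation.TransGen G v v

/-- A revealed-preference graph on vertex set `[n] × [n]`: every edge joins two profiles
that agree in exactly one coordinate (column edges agree in the first coordinate, row
edges agree in the second). -/
def IsRPGraph {n : ℕ} (G : Fin n × Fin n → Fin n × Fin n → Prop) : Prop :=
  ∀ v w, G v w → (v.1 = w.1 ∧ v.2 ≠ w.2) ∨ (v.2 = w.2 ∧ v.1 ≠ w.1)

/-- `G` implements the data set `T`: for each observation `((i,j),I,J) ∈ T` it contains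
the row edges from `(i,j)` to `(i',j)` for every other `i' ∈ I`, and the column edges
from `(i,j')` to `(i,j)` for every other `j' ∈ J`. -/
def Implements {n : ℕ} (G : Fin n × Fin n → Fin n × Fin n → Prop)
    (T : Finset (Obs n)) : Prop :=
  ∀ o ∈ T, (∀ i' ∈ o.2.1, i' ≠ o.1.1 → G o.1 (i', o.1.2)) ∧
    (∀ j' ∈ o.2.2, j' ≠ o.1.2 → G (o.1.1, j') o.1)

/-- If `G` is an acyclic revealed-preference graph that implements the
data set `T`, then `T` is rationalizable by a zero-sum game `(A,-A)`. -/
theorem rp_graph_zero_sum (n : ℕ) (T : Finset (Obs n)) (hT : IsDataset T)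
    (G : Fin n × Fin n → Fin n × Fin n → Prop) (hG : IsRPGraph G)
    (himp : Implements G T) (hacyc : Acyclic G) :
    ∃ A : Matrix (Fin n) (Fin n) ℝ, Rationalizes A (-A) T := by
  classical
  set f : Fin n × Fin n → ℕ :=
    fun v => (Finset.univ.filter (fun p => Relation.TransGen G v p)).card with hf
  have key : ∀ v w, G v w → f w < f v := by
    intro v w hvw
    apply Finset.card_lt_card
    constructor
    · intro x hx
      simp only [Finset.mem_filter, Finset.mem_univ, true_and] at hx ⊢
      exact (Relation.TransGen.single hvw).trans hx
    · intro hsub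
      have hw : w ∈ Finset.univ.filter (fun p => Relation.TransGen G v p) := by
        simp [Relation.TransGen.single hvw]
      have := hsub hw
      simp only [Finset.mem_filter, Finset.mem_univ, true_and] at this
      exact hacyc w this
  refine ⟨fun i j => (f (i, j) : ℝ), ?_⟩
  intro o ho
  obtain ⟨hi, hj⟩ := hT o ho
  obtain ⟨hrow, hcol⟩ := himp o ho
  refine ⟨hi, hj, ?_, ?_⟩
  · intro i' hi' hne
    show ((f (i', o.1.2) : ℕ) : ℝ) < ((f (o.1.1, o.1.2) : ℕ) : ℝ)
    exact_mod_cast key o.1 (i', o.1.2) (hrow i' hi' hne)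
  · intro j' hj' hne
    have := key (o.1.1, j') o.1 (hcol j' hj' hne)
    show -((f (o.1.1, j') : ℕ) : ℝ) < -((f (o.1.1, o.1.2) : ℕ) : ℝ)
    rw [neg_lt_neg_iff]
    exact_mod_cast this
end

section
/- Let T be a data set over an n × n strategy space that satisfies the uniqueness property, and let G be a revealed-preference graph that strongly implements T and is acyclic. Then there exists an n×n real matrix A such that the zero-sum game (A,−A) rationalizes T and, for every observation ((i,j),I,J) ∈ T, the profile (i,j) is the unique pure Nash equilibrium of the subgame (I,J) in (A,−A). -/
/-- `G` strongly implements `T`: it implements `T` and, for each observation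
`((i,j),I,J) ∈ T`, every profile `(i',j') ∈ I×J` other than `(i,j)` either has an
incoming row edge from some vertex in `I×J` or an outgoing column edge to some
vertex in `I×J`. -/
def StronglyImplements {n : ℕ} (G : Fin n × Fin n → Fin n × Fin n → Prop)
    (T : Finset (Obs n)) : Prop :=
  Implements G T ∧
  ∀ o ∈ T, ∀ i' ∈ o.2.1, ∀ j' ∈ o.2.2, (i', j') ≠ o.1 →
    (∃ a ∈ o.2.1, a ≠ i' ∧ G (a, j') (i', j')) ∨
    (∃ b ∈ o.2.2, b ≠ j' ∧ G (i', j') (i', b))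

/-- If `T` satisfies the uniqueness property and `G` is an acyclic
revealed-preference graph that strongly implements `T`, then there is `A` such that the
zero-sum game `(A,-A)` rationalizes `T` and every observed choice of `T` is the unique
pure Nash equilibrium of its subgame in `(A,-A)`. -/
theorem rp_graph_zero_sum_unique (n : ℕ) (T : Finset (Obs n)) (hT : IsDataset T)
    (huniq : UniqueProp T) (G : Fin n × Fin n → Fin n × Fin n → Prop) (hG : IsRPGraph G)
    (himp : StronglyImplements G T) (hacyc : Acyclic G) :
    ∃ A : Matrix (Fin n) (Fin n) ℝ, Rationalizes A (-A) T ∧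
      ∀ o ∈ T, ∀ i' ∈ o.2.1, ∀ j' ∈ o.2.2,
        PureNash A (-A) o.2.1 o.2.2 i' j' → (i', j') = o.1 := by
  classical
  set f : Fin n × Fin n → ℝ := fun v =>
    ((Finset.univ.filter (fun w => Relation.ReflTransGen G v w)).card : ℝ) with hf
  have key : ∀ v w, G v w → f v > f w := by
    intro v w hvw
    have hsub : Finset.univ.filter (fun x => Relation.ReflTransGen G w x) ⊂
        Finset.univ.filter (fun x => Relation.ReflTransGen G v x) := by
      constructor
      · intro x hx
        simp only [Finset.mem_filter, Finset.mem_univ, true_and] at hx ⊢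
        exact Relation.ReflTransGen.head hvw hx
      · intro hcon
        have hv : v ∈ Finset.univ.filter (fun x => Relation.ReflTransGen G v x) := by
          simp [Relation.ReflTransGen.refl]
        have := hcon hv
        simp only [Finset.mem_filter, Finset.mem_univ, true_and] at this
        exact hacyc v (Relation.TransGen.head' hvw this)
    have := Finset.card_lt_card hsub
    simp only [hf, gt_iff_lt]
    exact_mod_cast this
  refine ⟨Matrix.of (fun i j => f (i, j)), ?_, ?_⟩
  · intro o ho
    obtain ⟨hi, hj⟩ := hT o ho
    obtain ⟨hrow, hcol⟩ := himp.1 o ho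
    refine ⟨hi, hj, ?_, ?_⟩
    · intro i' hi' hne
      exact key o.1 (i', o.1.2) (hrow i' hi' hne)
    · intro j' hj' hne
      have := key (o.1.1, j') o.1 (hcol j' hj' hne)
      simp only [Matrix.neg_apply, Matrix.of_apply, neg_lt_neg_iff]
      exact this
  · intro o ho i' hi' j' hj' hpn
    by_contra hne
    rcases himp.2 o ho i' hi' j' hj' hne with ⟨a, ha, hane, hedge⟩ | ⟨b, hb, hbne, hedge⟩
    · have h1 := hpn.2.2.1 a ha
      have h2 := key (a, j') (i', j') hedge
      simp only [Matrix.of_apply] at h1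
      exact absurd h1 (not_le.mpr h2)
    · have h1 := hpn.2.2.2 b hb
      have h2 := key (i', j') (i', b) hedge
      simp only [Matrix.neg_apply, Matrix.of_apply, neg_le_neg_iff] at h1
      exact absurd h2 (not_lt.mpr h1)
end

section
/- Let T be a laminar data set over an n × n strategy space that satisfies the uniqueness property and in which no two distinct observations have the same observed choice. Then there exists an acyclic revealed-preference graph G that strongly implements T. -/
/-! The forced edges of `T` (row edges out of each observed choice, column edges into it) form an
acyclic relation, so they have a strictly decreasing rank `f`. Orienting every pair of adjacent
profiles from higher to lower rank gives the graph: for a profile `(i',j')` of the subgame of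
`((i,j),I,J)` off the cross of `(i,j)`, the forced path `(i,j') → (i,j) → (i',j)` gives
`f (i,j') > f (i',j)`, so `(i',j')` cannot be oriented against both.

For acyclicity, take a forced cycle and, among the observations whose choice lies on a cycle, one
with the largest subgame; call its choice `e`. Laminarity and uniqueness make `e` the choice of
every such observation whose subgame contains `e`. Hence `e` is on a cycle that leaves `e` by a row
edge to `w` and returns by a column edge from `u`, and the path from `w` to `u` avoids `e`. That
path stays in the subgame of an observation whose choice lies on it; being a product, this
subgame contains `(u.1, w.2) = e`, so its choice is `e`: a contradiction. -/

open Relation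

section Relation

variable {α : Type*} {r : α → α → Prop}

theorem acyclic_of_map_lt {β : Type*} [Preorder β] {f : α → β}
    (hf : ∀ a b, r a b → f b < f a) : Acyclic r := by
  have hlt : ∀ a b, TransGen r a b → f b < f a := fun a b h => by
    induction h with
    | single h => exact hf _ _ h
    | tail _ h ih => exact (hf _ _ h).trans ih
  exact fun a h => lt_irrefl _ (hlt a a h)

theorem Acyclic.exists_nat_rank [Finite α] (h : Acyclic r) :
    ∃ f : α → ℕ, ∀ a b, r a b → f b < f a :=
  ⟨fun a => {c | TransGen r a c}.ncard, fun _ b hab =>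
    Set.ncard_lt_ncard (ssubset_of_subset_not_superset (fun _ hc => .head hab hc)
      fun hsub => h b (hsub (.single hab)))⟩

theorem eq_of_reflTransGen_avoiding {a e : α}
    (h : ReflTransGen (fun x y => r x y ∧ y ≠ e) a e) : a = e := by
  rcases h.cases_tail with h | ⟨_, -, -, hne⟩
  · exact h.symm
  · exact absurd rfl hne

/-- A cycle through `e` splits at its first return to `e`. -/
theorem Relation.TransGen.exists_first_return {e : α} (h : TransGen r e e) :
    ∃ w u, r e w ∧ ReflTransGen (fun x y => r x y ∧ y ≠ e) w u ∧ r u e := by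
  obtain ⟨w, hew, hwe⟩ := TransGen.head'_iff.1 h
  have last_entry : ∀ x, ReflTransGen r x e →
      x = e ∨ ∃ u, ReflTransGen (fun x y => r x y ∧ y ≠ e) x u ∧ r u e := by
    intro x hx
    induction hx using ReflTransGen.head_induction_on with
    | refl => exact .inl rfl
    | @head x y hxy _ ih =>
      by_cases hy : y = e
      · exact .inr ⟨x, .refl, hy ▸ hxy⟩
      · obtain ⟨u, hyu, hue⟩ := ih.resolve_left hy
        exact .inr ⟨u, .head ⟨hxy, hy⟩ hyu, hue⟩
  rcases last_entry w hwe with rfl | ⟨u, hwu, hue⟩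
  · exact ⟨w, w, hew, .refl, hew⟩
  · exact ⟨w, u, hew, hwu, hue⟩

end Relation

variable {n : ℕ}

def RPAdj (v w : Fin n × Fin n) : Prop :=
  (v.1 = w.1 ∧ v.2 ≠ w.2) ∨ (v.2 = w.2 ∧ v.1 ≠ w.1)

theorem RPAdj.ne {v w : Fin n × Fin n} (h : RPAdj v w) : v ≠ w := by
  rintro rfl
  rcases h with ⟨-, h⟩ | ⟨-, h⟩ <;> exact h rfl

def subgame (o : Obs n) : Finset (Fin n × Fin n) := o.2.1 ×ˢ o.2.2

/-- The edges that any graph implementing `o` must contain. -/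
def ForcedEdge (o : Obs n) (v w : Fin n × Fin n) : Prop :=
  (v = o.1 ∧ w.2 = v.2 ∧ w.1 ∈ o.2.1 ∧ w.1 ≠ v.1) ∨
    (w = o.1 ∧ v.1 = w.1 ∧ v.2 ∈ o.2.2 ∧ v.2 ≠ w.2)

def forcedRel (T : Finset (Obs n)) (v w : Fin n × Fin n) : Prop :=
  ∃ o ∈ T, ForcedEdge o v w

namespace ForcedEdge

variable {o : Obs n} {v w : Fin n × Fin n}

theorem rpAdj (h : ForcedEdge o v w) : RPAdj v w := by
  rcases h with ⟨-, h₂, -, h₁⟩ | ⟨-, h₁, -, h₂⟩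
  · exact .inr ⟨h₂.symm, h₁.symm⟩
  · exact .inl ⟨h₁, h₂⟩

theorem ne (h : ForcedEdge o v w) : v ≠ w := h.rpAdj.ne

theorem choice_eq (h : ForcedEdge o v w) : o.1 = v ∨ o.1 = w := by
  rcases h with ⟨h, -⟩ | ⟨h, -⟩
  · exact .inl h.symm
  · exact .inr h.symm

theorem snd_eq (h : ForcedEdge o v w) (hw : o.1 ≠ w) : w.2 = v.2 := by
  rcases h with ⟨-, h, -⟩ | ⟨h, -⟩
  · exact h
  · exact absurd h.symm hw

theorem fst_eq (h : ForcedEdge o v w) (hv : o.1 ≠ v) : v.1 = w.1 := by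
  rcases h with ⟨h, -⟩ | ⟨-, h, -⟩
  · exact absurd h.symm hv
  · exact h

theorem mem_subgame (h : ForcedEdge o v w) (ho : o.1.1 ∈ o.2.1 ∧ o.1.2 ∈ o.2.2) :
    v ∈ subgame o ∧ w ∈ subgame o := by
  simp only [subgame, Finset.mem_product]
  rcases h with ⟨rfl, h₂, h₁, -⟩ | ⟨rfl, h₁, h₂, -⟩
  · exact ⟨ho, h₁, h₂ ▸ ho.2⟩
  · exact ⟨⟨h₁ ▸ ho.1, h₂⟩, ho⟩

end ForcedEdge

variable {T : Finset (Obs n)}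

theorem choice_mem_subgame (hT : IsDataset T) {o : Obs n} (ho : o ∈ T) : o.1 ∈ subgame o :=
  Finset.mem_product.2 (hT o ho)

theorem subgame_subset_or_subset (hlam : Laminar T) {o o' : Obs n} (ho : o ∈ T) (ho' : o' ∈ T)
    {x : Fin n × Fin n} (hx : x ∈ subgame o) (hx' : x ∈ subgame o') :
    subgame o ⊆ subgame o' ∨ subgame o' ⊆ subgame o := by
  by_contra! h
  exact hlam o ho o' ho' ⟨⟨x, Finset.mem_inter.2 ⟨hx, hx'⟩⟩, h⟩

theorem choice_eq_of_card_subgame_le (hT : IsDataset T) (hlam : Laminar T)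
    (huniq : UniqueProp T) {o o' : Obs n} (ho : o ∈ T) (ho' : o' ∈ T)
    (hmem : o.1 ∈ subgame o') (hcard : (subgame o').card ≤ (subgame o).card) : o'.1 = o.1 := by
  have hsub : subgame o' ⊆ subgame o := by
    rcases subgame_subset_or_subset hlam ho' ho hmem (choice_mem_subgame hT ho) with h | h
    · exact h
    · exact (Finset.eq_of_subset_of_card_le h hcard).ge
  exact huniq.2 o ho o' ho' hsub hmem

theorem exists_subgame_of_transGen (hT : IsDataset T) (hlam : Laminar T)
    {r : Fin n × Fin n → Fin n × Fin n → Prop} (hr : ∀ x y, r x y → forcedRel T x y)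
    {a b : Fin n × Fin n} (h : TransGen r a b) :
    ∃ o ∈ T, a ∈ subgame o ∧ b ∈ subgame o ∧ ReflTransGen r a o.1 ∧ ReflTransGen r o.1 b := by
  have edge : ∀ {x y}, r x y → ∃ o ∈ T, x ∈ subgame o ∧ y ∈ subgame o ∧
      ReflTransGen r x o.1 ∧ ReflTransGen r o.1 y := fun {x y} hxy => by
    obtain ⟨o, ho, h⟩ := hr x y hxy
    refine ⟨o, ho, h.mem_subgame (hT o ho) |>.1, h.mem_subgame (hT o ho) |>.2, ?_⟩
    rcases h.choice_eq with h | h <;> rw [h]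
    exacts [⟨.refl, .single hxy⟩, ⟨.single hxy, .refl⟩]
  induction h with
  | single hab => exact edge hab
  | @tail b c _ hbc ih =>
    obtain ⟨o, ho, ha, hb, hao, hob⟩ := ih
    obtain ⟨o', ho', hb', hc', hbo', hoc'⟩ := edge hbc
    rcases subgame_subset_or_subset hlam ho ho' hb hb' with hsub | hsub
    · exact ⟨o', ho', hsub ha, hc', (hao.trans hob).trans hbo', hoc'⟩
    · exact ⟨o, ho, ha, hsub hc', hao, hob.tail hbc⟩

theorem not_transGen_forcedRel_of_choice_eq (hT : IsDataset T) (hlam : Laminar T)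
    {e : Fin n × Fin n}
    (he : ∀ o ∈ T, TransGen (forcedRel T) o.1 o.1 → e ∈ subgame o → o.1 = e) :
    ¬ TransGen (forcedRel T) e e := by
  intro hcyc
  obtain ⟨w, u, ⟨o₁, ho₁, h₁⟩, hwu, ⟨o₂, ho₂, h₂⟩⟩ := hcyc.exists_first_return
  have forget : ∀ {x y}, ReflTransGen (fun x y => forcedRel T x y ∧ y ≠ e) x y →
      ReflTransGen (forcedRel T) x y := ReflTransGen.mono (fun _ _ h => h.1) _ _
  have hwu' := forget hwu
  have on_cycle : ∀ x, ReflTransGen (forcedRel T) w x → ReflTransGen (forcedRel T) x u →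
      TransGen (forcedRel T) x x := fun x hwx hxu =>
    ((TransGen.tail' hxu ⟨o₂, ho₂, h₂⟩).tail ⟨o₁, ho₁, h₁⟩).trans_left hwx
  have hw : w.2 = e.2 := h₁.snd_eq fun hc => h₁.ne <| by
    rw [← he o₁ ho₁ (hc ▸ on_cycle w .refl hwu') (h₁.mem_subgame (hT o₁ ho₁)).1, hc]
  have hu : u.1 = e.1 := h₂.fst_eq fun hc => h₂.ne <| by
    rw [← he o₂ ho₂ (hc ▸ on_cycle u hwu' .refl) (h₂.mem_subgame (hT o₂ ho₂)).2, hc]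
  have hwe : w ≠ e := h₁.ne.symm
  have hwu_ne : w ≠ u := fun h => hwe (Prod.ext (h ▸ hu) hw)
  obtain ⟨o, ho, hwo, huo, hw_o, ho_u⟩ := exists_subgame_of_transGen hT hlam (fun _ _ h => h.1)
    ((reflTransGen_iff_eq_or_transGen.1 hwu).resolve_left hwu_ne.symm)
  have heo : e ∈ subgame o := Finset.mem_product.2
    ⟨hu ▸ (Finset.mem_product.1 huo).1, hw ▸ (Finset.mem_product.1 hwo).2⟩
  have hoe := he o ho (on_cycle _ (forget hw_o) (forget ho_u)) heo
  exact hwe (eq_of_reflTransGen_avoiding (hoe ▸ hw_o))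

theorem forcedRel_acyclic (hT : IsDataset T) (hlam : Laminar T) (huniq : UniqueProp T) :
    Acyclic (forcedRel T) := by
  classical
  intro v hv
  set S := T.filter fun o => TransGen (forcedRel T) o.1 o.1
  have hS : S.Nonempty := by
    obtain ⟨x, ⟨o, ho, hvx⟩, hxv⟩ := TransGen.head'_iff.1 hv
    refine ⟨o, Finset.mem_filter.2 ⟨ho, ?_⟩⟩
    rcases hvx.choice_eq with h | h <;> rw [h]
    exacts [hv, TransGen.tail' hxv ⟨o, ho, hvx⟩]
  obtain ⟨os, hos, hmax⟩ := S.exists_max_image (fun o => (subgame o).card) hS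
  rw [Finset.mem_filter] at hos
  refine not_transGen_forcedRel_of_choice_eq hT hlam (fun o ho hcyc hmem => ?_) hos.2
  exact choice_eq_of_card_subgame_le hT hlam huniq hos.1 ho hmem
    (hmax o (Finset.mem_filter.2 ⟨ho, hcyc⟩))

theorem stronglyImplements_of_rank (hT : IsDataset T) {f : Fin n × Fin n → ℕ}
    (hf : ∀ v w, forcedRel T v w → f w < f v) :
    StronglyImplements (fun v w => RPAdj v w ∧ f w < f v) T := by
  have forced : ∀ o ∈ T, ∀ {v w}, ForcedEdge o v w → RPAdj v w ∧ f w < f v :=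
    fun o ho v w h => ⟨h.rpAdj, hf v w ⟨o, ho, h⟩⟩
  refine ⟨fun o ho => ⟨fun i' hi' hne => forced o ho (.inl ⟨rfl, rfl, hi', hne⟩),
    fun j' hj' hne => forced o ho (.inr ⟨rfl, rfl, hj', hne⟩)⟩, ?_⟩
  rintro ⟨⟨i, j⟩, I, J⟩ ho i' hi' j' hj' hne
  obtain ⟨hi, hj⟩ := hT _ ho
  have row : ∀ i' ∈ I, i' ≠ i → RPAdj (i, j) (i', j) ∧ f (i', j) < f (i, j) :=
    fun i' hi' hne => forced _ ho (.inl ⟨rfl, rfl, hi', hne⟩)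
  have col : ∀ j' ∈ J, j' ≠ j → RPAdj (i, j') (i, j) ∧ f (i, j) < f (i, j') :=
    fun j' hj' hne => forced _ ho (.inr ⟨rfl, rfl, hj', hne⟩)
  by_cases hii : i' = i
  · subst hii
    have hjj : j' ≠ j := fun h => hne (by rw [h])
    exact .inr ⟨j, hj, hjj.symm, col j' hj' hjj⟩
  by_cases hjj : j' = j
  · subst hjj
    exact .inl ⟨i, hi, Ne.symm hii, row i' hi' hii⟩
  rcases lt_or_ge (f (i', j')) (f (i, j')) with h | h
  · exact .inl ⟨i, hi, Ne.symm hii, .inr ⟨rfl, Ne.symm hii⟩, h⟩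
  · refine .inr ⟨j, hj, Ne.symm hjj, .inl ⟨rfl, hjj⟩, ?_⟩
    have := (row i' hi' hii).2
    have := (col j' hj' hjj).2
    omega

theorem laminar_acyclic_rp_graph_general (n : ℕ) (T : Finset (Obs n)) (hT : IsDataset T)
    (hlam : Laminar T) (huniq : UniqueProp T) :
    ∃ G : Fin n × Fin n → Fin n × Fin n → Prop,
      IsRPGraph G ∧ Acyclic G ∧ StronglyImplements G T := by
  obtain ⟨f, hf⟩ := (forcedRel_acyclic hT hlam huniq).exists_nat_rank
  exact ⟨fun v w => RPAdj v w ∧ f w < f v, fun _ _ h => h.1, acyclic_of_map_lt fun _ _ h => h.2,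
    stronglyImplements_of_rank hT hf⟩

/-- If `T` is a laminar data set satisfying the uniqueness property in
which no two distinct observations have the same observed choice, then there exists an
acyclic revealed-preference graph that strongly implements `T`. -/
theorem laminar_acyclic_rp_graph (n : ℕ) (T : Finset (Obs n)) (hT : IsDataset T)
    (hlam : Laminar T) (huniq : UniqueProp T)
    (hinj : ∀ o ∈ T, ∀ o' ∈ T, o.1 = o'.1 → o = o') :
    ∃ G : Fin n × Fin n → Fin n × Fin n → Prop,
      IsRPGraph G ∧ Acyclic G ∧ StronglyImplements G T :=
  laminar_acyclic_rp_graph_general n T hT hlam huniq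
end

section
/- Let T be a rationalizable data set over an n × n strategy space. Define a directed graph on vertex set [n]×[n] whose edges are: a row edge from (i,j) to (i',j) whenever there is an observation ((i,j),I,J) ∈ T with i' ∈ I and i' ≠ i, and a column edge from (i,j') to (i,j) whenever there is an observation ((i,j),I,J) ∈ T with j' ∈ J and j' ≠ j. Then this graph contains no directed cycle consisting entirely of row edges, and no directed cycle consisting entirely of column edges. -/
/-- The row edges revealed by `T`: an edge from `(i,j)` to `(i',j)` whenever some
observation `((i,j),I,J) ∈ T` has `i' ∈ I` and `i' ≠ i`. -/
def RowEdge {n : ℕ} (T : Finset (Obs n)) (v w : Fin n × Fin n) : Prop :=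
  w.2 = v.2 ∧ w.1 ≠ v.1 ∧ ∃ I J : Finset (Fin n), (v, I, J) ∈ T ∧ w.1 ∈ I

/-- The column edges revealed by `T`: an edge from `(i,j')` to `(i,j)` whenever some
observation `((i,j),I,J) ∈ T` has `j' ∈ J` and `j' ≠ j`. -/
def ColEdge {n : ℕ} (T : Finset (Obs n)) (v w : Fin n × Fin n) : Prop :=
  v.1 = w.1 ∧ v.2 ≠ w.2 ∧ ∃ I J : Finset (Fin n), (w, I, J) ∈ T ∧ v.2 ∈ J

/-- If `T` is rationalizable, then the revealed-preference graph of `T`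
contains no directed cycle consisting entirely of row edges, and no directed cycle
consisting entirely of column edges. -/
theorem no_monochromatic_cycles (n : ℕ) (T : Finset (Obs n)) (hT : IsDataset T)
    (hrat : Rationalizable T) :
    Acyclic (RowEdge T) ∧ Acyclic (ColEdge T) := by
  obtain ⟨A, B, hAB⟩ := hrat
  have hrow : ∀ v w, RowEdge T v w → A w.1 w.2 < A v.1 v.2 := by
    rintro v w ⟨h2, h1, I, J, hmem, hwI⟩
    have := (hAB _ hmem).2.2.1 w.1 hwI h1
    rw [h2]; exact this
  have hcol : ∀ v w, ColEdge T v w → B v.1 v.2 < B w.1 w.2 := by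
    rintro v w ⟨h1, h2, I, J, hmem, hvJ⟩
    have := (hAB _ hmem).2.2.2 v.2 hvJ h2
    rw [h1]; exact this
  constructor
  · intro v hv
    have : ∀ w, Relation.TransGen (RowEdge T) v w → A w.1 w.2 < A v.1 v.2 := by
      intro w hw
      induction hw with
      | single h => exact hrow _ _ h
      | tail _ h ih => exact (hrow _ _ h).trans ih
    exact lt_irrefl _ (this v hv)
  · intro v hv
    have : ∀ w, Relation.TransGen (ColEdge T) v w → B v.1 v.2 < B w.1 w.2 := by
      intro w hw
      induction hw with
      | single h => exact hcol _ _ h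
      | tail _ h ih => exact ih.trans (hcol _ _ h)
    exact lt_irrefl _ (this v hv)
end

section
/- Let T be a data set over an n × n strategy space, let S ⊆ [n]×[n], and let G be a split revealed-preference graph with split set S that implements T and is acyclic. Then there exists a bimatrix game (A,B) that rationalizes T with rank(A+B) ≤ min( |{ i : (i,j) ∈ S for some j }| , |{ j : (i,j) ∈ S for some i }| ). -/
open Classical in
lemma rank_le_of_rows_zero {m k : ℕ} (M : Matrix (Fin m) (Fin k) ℝ) (Rs : Set (Fin m))
    (h : ∀ i, i ∉ Rs → ∀ j, M i j = 0) : M.rank ≤ Rs.ncard := by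
  classical
  haveI : Fintype ↥Rs := Fintype.ofFinite _
  have hcard : Rs.ncard = Fintype.card ↥Rs := by
    rw [← Nat.card_coe_set_eq, Nat.card_eq_fintype_card]
  set E : Matrix (Fin m) ↥Rs ℝ := Matrix.of fun i r => if i = (r : Fin m) then 1 else 0 with hE
  set N : Matrix ↥Rs (Fin k) ℝ := Matrix.of fun r j => M (r : Fin m) j with hN
  have hfac : M = E * N := by
    ext i j
    rw [Matrix.mul_apply]
    by_cases hi : i ∈ Rs
    · have : ∀ r : ↥Rs, E i r * N r j = if r = ⟨i, hi⟩ then M i j else 0 := by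
        intro r
        simp only [hE, hN, Matrix.of_apply, ite_mul, one_mul, zero_mul]
        by_cases hr : i = (r : Fin m)
        · have hre : r = ⟨i, hi⟩ := Subtype.ext hr.symm
          rw [if_pos hr, if_pos hre, ← hr]
        · have hre : r ≠ ⟨i, hi⟩ := fun he => hr (by rw [he])
          rw [if_neg hr, if_neg hre]
      rw [Finset.sum_congr rfl fun r _ => this r, Finset.sum_ite_eq' Finset.univ]
      simp
    · have : ∀ r : ↥Rs, E i r * N r j = 0 := by
        intro r
        have : i ≠ (r : Fin m) := fun he => hi (he ▸ r.2)
        simp [hE, Matrix.of_apply, this]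
      rw [Finset.sum_congr rfl fun r _ => this r]
      simp [h i hi j]
  calc M.rank = (E * N).rank := by rw [hfac]
    _ ≤ N.rank := Matrix.rank_mul_le_right E N
    _ ≤ Fintype.card ↥Rs := Matrix.rank_le_card_height N
    _ = Rs.ncard := hcard.symm


/-- A vertex of a split revealed-preference graph: an underlying profile in `[n] × [n]`
together with a tag (`none` = intact `∅`, `some true` = row vertex `R`,
`some false` = column vertex `C`). -/
abbrev SVert (n : ℕ) := (Fin n × Fin n) × Option Bool

/-- A valid vertex for split set `S`: intact vertices are exactly the profiles not in `S`,
while profiles in `S` carry a row tag or a column tag. -/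
def ValidVert {n : ℕ} (S : Set (Fin n × Fin n)) (v : SVert n) : Prop :=
  (v.2 = none ∧ v.1 ∉ S) ∨ (v.2 ≠ none ∧ v.1 ∈ S)

/-- A split revealed-preference graph with split set `S`: every edge joins two valid
vertices whose underlying profiles agree in exactly one coordinate; row edges
(same second coordinate) are incident only on vertices tagged `R` or `∅`, and column
edges (same first coordinate) only on vertices tagged `C` or `∅`. -/
def IsSplitRPGraph {n : ℕ} (S : Set (Fin n × Fin n))
    (G : SVert n → SVert n → Prop) : Prop :=
  ∀ v w, G v w → ValidVert S v ∧ ValidVert S w ∧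
    ((v.1.2 = w.1.2 ∧ v.1.1 ≠ w.1.1 ∧ v.2 ≠ some false ∧ w.2 ≠ some false) ∨
     (v.1.1 = w.1.1 ∧ v.1.2 ≠ w.1.2 ∧ v.2 ≠ some true ∧ w.2 ≠ some true))

/-- `G` implements `T`: for each observation `((i,j),I,J) ∈ T` and each other `i' ∈ I`
there is a row edge from a vertex with underlying profile `(i,j)` to a vertex with
underlying profile `(i',j)`, and for each other `j' ∈ J` there is a column edge from a
vertex with underlying profile `(i,j')` to a vertex with underlying profile `(i,j)`. -/
def SplitImplements {n : ℕ} (G : SVert n → SVert n → Prop)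
    (T : Finset (Obs n)) : Prop :=
  ∀ o ∈ T,
    (∀ i' ∈ o.2.1, i' ≠ o.1.1 → ∃ t t' : Option Bool, t ≠ some false ∧ t' ≠ some false ∧
        G (o.1, t) ((i', o.1.2), t')) ∧
    (∀ j' ∈ o.2.2, j' ≠ o.1.2 → ∃ t t' : Option Bool, t ≠ some true ∧ t' ≠ some true ∧
        G ((o.1.1, j'), t) (o.1, t'))

/-- If `G` is an acyclic split revealed-preference graph with split set
`S` that implements the data set `T`, then some bimatrix game `(A,B)` rationalizes `T`
with `rank (A+B)` at most the minimum of the number of rows and the number of columns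
meeting `S`. -/
theorem split_rp_graph_low_rank (n : ℕ) (T : Finset (Obs n)) (hT : IsDataset T)
    (S : Set (Fin n × Fin n)) (G : SVert n → SVert n → Prop)
    (hG : IsSplitRPGraph S G) (himp : SplitImplements G T) (hacyc : Acyclic G) :
    ∃ A B : Matrix (Fin n) (Fin n) ℝ, Rationalizes A B T ∧
      (A + B).rank ≤
        min {i : Fin n | ∃ j, (i, j) ∈ S}.ncard {j : Fin n | ∃ i, (i, j) ∈ S}.ncard := by
  classical
  -- a potential decreasing along edges
  set φ : SVert n → ℕ := fun v => (Finset.univ.filter fun u => Relation.TransGen G v u).card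
    with hφdef
  have hstep : ∀ v w, G v w → φ w < φ v := by
    intro v w hvw
    apply Finset.card_lt_card
    constructor
    · intro u hu
      simp only [Finset.mem_filter, Finset.mem_univ, true_and] at hu ⊢
      exact Relation.TransGen.head hvw hu
    · intro hsub
      have hw : w ∈ Finset.univ.filter fun u => Relation.TransGen G v u := by
        simp [Relation.TransGen.single hvw]
      have := hsub hw
      simp only [Finset.mem_filter, Finset.mem_univ, true_and] at this
      exact hacyc w this
  set rv : Fin n × Fin n → SVert n :=
    fun p => (p, if p ∈ S then some true else none) with hrvdef
  set cv : Fin n × Fin n → SVert n :=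
    fun p => (p, if p ∈ S then some false else none) with hcvdef
  have hrv : ∀ v : SVert n, ValidVert S v → v.2 ≠ some false → v = rv v.1 := by
    rintro ⟨p, t⟩ hv ht
    rcases hv with ⟨h1, h2⟩ | ⟨h1, h2⟩
    · simp only at h1
      simp [hrvdef, h1, h2]
    · match t, h1, ht with
      | some true, _, _ => simp [hrvdef, h2]
  have hcv : ∀ v : SVert n, ValidVert S v → v.2 ≠ some true → v = cv v.1 := by
    rintro ⟨p, t⟩ hv ht
    rcases hv with ⟨h1, h2⟩ | ⟨h1, h2⟩
    · simp only at h1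
      simp [hcvdef, h1, h2]
    · match t, h1, ht with
      | some false, _, _ => simp [hcvdef, h2]
  set A : Matrix (Fin n) (Fin n) ℝ := Matrix.of fun i j => (φ (rv (i, j)) : ℝ) with hAdef
  set B : Matrix (Fin n) (Fin n) ℝ := Matrix.of fun i j => -(φ (cv (i, j)) : ℝ) with hBdef
  refine ⟨A, B, ?_, ?_⟩
  · -- rationalization
    intro o ho
    obtain ⟨hi, hj⟩ := hT o ho
    refine ⟨hi, hj, ?_, ?_⟩
    · intro i' hi' hne
      obtain ⟨t, t', ht, ht', hedge⟩ := (himp o ho).1 i' hi' hne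
      obtain ⟨hv, hw, -⟩ := hG _ _ hedge
      have h1 : (o.1, t) = rv o.1 := hrv _ hv ht
      have h2 : ((i', o.1.2), t') = rv (i', o.1.2) := hrv _ hw ht'
      have := hstep _ _ hedge
      rw [h1, h2] at this
      simpa [hAdef] using (Nat.cast_lt (α := ℝ)).2 this
    · intro j' hj' hne
      obtain ⟨t, t', ht, ht', hedge⟩ := (himp o ho).2 j' hj' hne
      obtain ⟨hv, hw, -⟩ := hG _ _ hedge
      have h1 : ((o.1.1, j'), t) = cv (o.1.1, j') := hcv _ hv ht
      have h2 : (o.1, t') = cv o.1 := hcv _ hw ht'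
      have := hstep _ _ hedge
      rw [h1, h2] at this
      have : -(φ (cv (o.1.1, j')) : ℝ) < -(φ (cv o.1) : ℝ) :=
        neg_lt_neg ((Nat.cast_lt (α := ℝ)).2 this)
      simpa [hBdef] using this
  · -- rank bound
    have hM0 : ∀ i j, (i, j) ∉ S → (A + B) i j = 0 := by
      intro i j hij
      simp [hAdef, hBdef, hrvdef, hcvdef, hij]
    refine le_min ?_ ?_
    · exact rank_le_of_rows_zero _ _ fun i hi j =>
        hM0 i j fun hij => hi ⟨j, hij⟩
    · have := rank_le_of_rows_zero (A + B).transpose {j : Fin n | ∃ i, (i, j) ∈ S}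
        (fun j hjn i => hM0 i j fun hij => hjn ⟨i, hij⟩)
      rwa [Matrix.rank_transpose] at this
end

section
/- Let T be a rationalizable data set over an n × n strategy space that satisfies the uniqueness property. Let O_C be the set of observed choices of observations in T whose subgame crosses some subgame appearing in T. Then there exists an acyclic split revealed-preference graph with split set O_C that implements T. -/
/-- The observed choices of observations of `T` whose subgame crosses some subgame
appearing in `T`. -/
def crossingChoices {n : ℕ} (T : Finset (Obs n)) : Set (Fin n × Fin n) :=
  {p | ∃ o ∈ T, o.1 = p ∧ ∃ o' ∈ T, Cross o.2 o'.2}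

namespace SplitRP

section WalkAPI
variable {V : Type*}

/-- A directed walk along relation `R`. -/
inductive RWalk (R : V → V → Prop) : V → V → Type _
  | nil (v : V) : RWalk R v v
  | cons {u v w : V} (h : R u v) (p : RWalk R v w) : RWalk R u w

namespace RWalk

variable {R P Q : V → V → Prop}

def mem : ∀ {u v : V}, RWalk R u v → V → Prop
  | _, _, .nil v, x => x = v
  | _, _, @cons _ _ u _ _ _ p, x => x = u ∨ p.mem x

def length : ∀ {u v : V}, RWalk R u v → ℕ
  | _, _, .nil _ => 0
  | _, _, .cons _ p => p.length + 1

def append : ∀ {u v w : V}, RWalk R u v → RWalk R v w → RWalk R u w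
  | _, _, _, .nil _, q => q
  | _, _, _, .cons h p, q => .cons h (p.append q)

def reverse : ∀ {u v : V}, RWalk R u v → RWalk (flip R) v u
  | _, _, .nil v => .nil v
  | _, _, @cons _ _ u a _ h p => p.reverse.append (.cons (show flip R a u from h) (.nil u))

/-- all edges satisfy `P`. -/
def EdgesP (P : V → V → Prop) : ∀ {u v : V}, RWalk R u v → Prop
  | _, _, .nil _ => True
  | _, _, @cons _ _ a b _ _ p => P a b ∧ p.EdgesP P

def transfer : ∀ {u v : V} (w : RWalk R u v), w.EdgesP P → RWalk P u v
  | _, _, .nil v, _ => .nil v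
  | _, _, .cons _ p, h => .cons h.1 (p.transfer h.2)

/-- `x` does not occur in the walk except possibly as the final vertex. -/
def NoInner (x : V) : ∀ {u v : V}, RWalk R u v → Prop
  | _, _, .nil _ => True
  | _, _, @cons _ _ a _ _ _ p => a ≠ x ∧ p.NoInner x

/-- the first edge satisfies `P`.  (False for the empty walk.) -/
def FirstP (P : V → V → Prop) : ∀ {u v : V}, RWalk R u v → Prop
  | _, _, .nil _ => False
  | _, _, @cons _ _ a b _ _ _ => P a b

/-- some edge satisfies `P`. -/
def HasE (P : V → V → Prop) : ∀ {u v : V}, RWalk R u v → Prop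
  | _, _, .nil _ => False
  | _, _, @cons _ _ a b _ _ p => P a b ∨ p.HasE P

/-- a `Q`-edge immediately followed by a `P`-edge occurs. -/
def HasQP (Q P : V → V → Prop) : ∀ {u v : V}, RWalk R u v → Prop
  | _, _, .nil _ => False
  | _, _, @cons _ _ a b _ _ p => (Q a b ∧ p.FirstP P) ∨ p.HasQP Q P

lemma mem_right : ∀ {u v : V} (w : RWalk R u v), w.mem v
  | _, _, .nil v => rfl
  | _, _, .cons _ p => Or.inr p.mem_right

lemma mem_left : ∀ {u v : V} (w : RWalk R u v), w.mem u
  | _, _, .nil _ => rfl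
  | _, _, .cons _ _ => Or.inl rfl

lemma mem_append : ∀ {u v w : V} (p : RWalk R u v) (q : RWalk R v w) (x : V),
    (p.append q).mem x ↔ p.mem x ∨ q.mem x
  | _, _, _, .nil _, q, x => by
      simp only [append, mem]
      constructor
      · intro h; exact Or.inr h
      · rintro (rfl | h); · exact q.mem_left
        · exact h
  | _, _, _, .cons h p, q, x => by
      simp only [append, mem, mem_append p q x, or_assoc]

lemma length_append : ∀ {u v w : V} (p : RWalk R u v) (q : RWalk R v w),
    (p.append q).length = p.length + q.length
  | _, _, _, .nil _, q => by simp [append, length]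
  | _, _, _, .cons h p, q => by simp [append, length, length_append p q]; omega

lemma mem_reverse : ∀ {u v : V} (w : RWalk R u v) (x : V), w.reverse.mem x ↔ w.mem x
  | _, _, .nil _, x => Iff.rfl
  | _, _, @cons _ _ u a _ h p, x => by
      simp only [reverse, mem, mem_append, mem_reverse p x]
      constructor
      · rintro (h1 | (h1 | h1))
        · exact Or.inr h1
        · exact Or.inr (h1 ▸ p.mem_left)
        · exact Or.inl h1
      · rintro (h1 | h1)
        · exact Or.inr (Or.inr h1)
        · exact Or.inl h1

lemma length_reverse : ∀ {u v : V} (w : RWalk R u v), w.reverse.length = w.length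
  | _, _, .nil _ => rfl
  | _, _, .cons h p => by
      simp only [reverse, length, length_append, length_reverse p]

lemma mem_transfer : ∀ {u v : V} (w : RWalk R u v) (h : w.EdgesP P) (x : V),
    (w.transfer h).mem x ↔ w.mem x
  | _, _, .nil _, _, x => Iff.rfl
  | _, _, .cons _ p, h, x => by
      simp only [transfer, mem, mem_transfer p h.2 x]

lemma length_transfer : ∀ {u v : V} (w : RWalk R u v) (h : w.EdgesP P),
    (w.transfer h).length = w.length
  | _, _, .nil _, _ => rfl
  | _, _, .cons _ p, h => by simp only [transfer, length, length_transfer p h.2]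

lemma edgesP_mono {P' : V → V → Prop} (hPP : ∀ a b, P a b → P' a b) :
    ∀ {u v : V} (w : RWalk R u v), w.EdgesP P → w.EdgesP P'
  | _, _, .nil _, _ => trivial
  | _, _, .cons _ p, h => ⟨hPP _ _ h.1, edgesP_mono hPP p h.2⟩

lemma edgesP_of_rel (hPP : ∀ a b, R a b → P a b) :
    ∀ {u v : V} (w : RWalk R u v), w.EdgesP P
  | _, _, .nil _ => trivial
  | _, _, .cons h p => ⟨hPP _ _ h, edgesP_of_rel hPP p⟩

lemma edgesP_append : ∀ {u v w : V} (p : RWalk R u v) (q : RWalk R v w),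
    (p.append q).EdgesP P ↔ p.EdgesP P ∧ q.EdgesP P
  | _, _, _, .nil _, q => by simp [append, EdgesP]
  | _, _, _, .cons h p, q => by
      simp only [append, EdgesP, edgesP_append p q, and_assoc]

lemma edgesP_of_reverse : ∀ {u v : V} (w : RWalk R u v),
    w.reverse.EdgesP P → w.EdgesP (fun a b => P b a)
  | _, _, .nil _, _ => trivial
  | _, _, .cons h p, hE => by
      simp only [reverse, edgesP_append, EdgesP] at hE
      exact ⟨hE.2.1, edgesP_of_reverse p hE.1⟩

lemma edgesP_reverse_of : ∀ {u v : V} (w : RWalk R u v),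
    w.EdgesP P → w.reverse.EdgesP (fun a b => P b a)
  | _, _, .nil _, _ => trivial
  | _, _, .cons h p, hE => by
      simp only [reverse, edgesP_append, EdgesP]
      exact ⟨edgesP_reverse_of p hE.2, hE.1, trivial⟩

/-- split a walk at the first occurrence of `x`. -/
lemma split_first [DecidableEq V] : ∀ {u v : V} (w : RWalk R u v) (x : V), w.mem x →
    ∃ (w₁ : RWalk R u x) (w₂ : RWalk R x v),
      (∀ z, w₁.mem z → w.mem z) ∧ (∀ z, w₂.mem z → w.mem z) ∧ w₁.NoInner x ∧
      w₁.length + w₂.length = w.length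
  | _, _, .nil v, x, hx => by
      cases hx
      exact ⟨.nil v, .nil v, by intro z h; exact h, by intro z h; exact h, trivial, by simp [length]⟩
  | _, _, @cons _ _ u a v h p, x, hx => by
      by_cases hu : u = x
      · subst hu
        exact ⟨.nil u, .cons h p, by rintro z rfl; exact Or.inl rfl, by intro z hz; exact hz,
          trivial, by simp [length]⟩
      · have hpx : p.mem x := by
          rcases hx with h1 | h1
          · exact absurd h1.symm hu
          · exact h1
        obtain ⟨w₁, w₂, hm1, hm2, hni, hlen⟩ := split_first p x hpx
        refine ⟨.cons h w₁, w₂, ?_, fun z hz => Or.inr (hm2 z hz), ⟨hu, hni⟩,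
          by simp only [length, ← hlen]; omega⟩
        rintro z (rfl | hz)
        · exact Or.inl rfl
        · exact Or.inr (hm1 z hz)

end RWalk
end WalkAPI
end SplitRP
namespace SplitRP
namespace RWalk
variable {V : Type*} {R P Q : V → V → Prop}

lemma edgesP_transfer : ∀ {u v : V} (w : RWalk R u v) (h : w.EdgesP P) {Q : V → V → Prop},
    (w.transfer h).EdgesP Q ↔ w.EdgesP Q
  | _, _, .nil _, _, _ => Iff.rfl
  | _, _, .cons _ p, h, Q => by
      simp only [transfer, EdgesP, edgesP_transfer p h.2]

/-- the last edge satisfies `P`. -/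
def LastP (P : V → V → Prop) : ∀ {u v : V}, RWalk R u v → Prop
  | _, _, .nil _ => False
  | _, _, @cons _ _ a b _ _ (.nil _) => P a b
  | _, _, .cons _ p => p.LastP P

lemma firstP_length {u v : V} {w : RWalk R u v} (h : w.FirstP P) : 1 ≤ w.length := by
  cases w
  · exact absurd h (by simp [FirstP])
  · simp [length]

lemma lastP_cons {u a v : V} (h : R u a) (p : RWalk R a v) (hp : 1 ≤ p.length) :
    (RWalk.cons h p).LastP P ↔ p.LastP P := by
  cases p
  · simp [length] at hp
  · rfl

lemma lastP_length {u v : V} {w : RWalk R u v} (h : w.LastP P) : 1 ≤ w.length := by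
  cases w
  · exact absurd h (by simp [LastP])
  · simp [length]

/-- peel off the last edge of a nonempty walk. -/
lemma snoc_decomp {x : V} : ∀ {u v : V} (w : RWalk R u v), 1 ≤ w.length →
    ∃ (z : V) (w' : RWalk R u z), R z v ∧
      w'.length + 1 = w.length ∧ (∀ t, w'.mem t → w.mem t) ∧
      (∀ P' : V → V → Prop, w.LastP P' ↔ P' z v) ∧
      (∀ S : V → V → Prop, w'.EdgesP S → S z v → w.EdgesP S) ∧
      (∀ S : V → V → Prop, w.EdgesP S → w'.EdgesP S ∧ S z v) ∧
      (w.NoInner x → ∀ t, w'.mem t → t ≠ x) ∧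
      (1 ≤ w'.length → ∀ P' : V → V → Prop, (w.FirstP P' ↔ w'.FirstP P'))
  | _, _, .nil _, h => by simp [length] at h
  | _, _, @cons _ _ u a v e p, _ => by
      rcases p with _ | @⟨a, b, v, e₂, p₂⟩
      · refine ⟨u, .nil u, e, by simp [length], ?_, ?_, ?_, ?_, ?_, ?_⟩
        · rintro t rfl; exact Or.inl rfl
        · intro P'; rfl
        · intro S _ h2; exact ⟨h2, trivial⟩
        · intro S hS; exact ⟨trivial, hS.1⟩
        · rintro hni t rfl; exact hni.1
        · intro h'; simp [length] at h'
      · obtain ⟨z, w', hzv, hlen, hmem, hlast, hbuild, hsplit, hni, hfirst⟩ :=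
          snoc_decomp (x := x) (.cons e₂ p₂) (by simp [length])
        refine ⟨z, .cons e w', hzv, by simp only [length] at hlen ⊢; omega, ?_, ?_, ?_, ?_, ?_, ?_⟩
        · rintro t (rfl | ht)
          · exact Or.inl rfl
          · exact Or.inr (hmem t ht)
        · intro P'
          rw [lastP_cons e _ (by simp [length]), hlast]
        · intro S hS h2
          exact ⟨hS.1, hbuild S hS.2 h2⟩
        · intro S hS
          obtain ⟨h1, h2⟩ := hsplit S hS.2
          exact ⟨⟨hS.1, h1⟩, h2⟩
        · rintro hN t (rfl | ht)
          · exact hN.1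
          · exact hni hN.2 t ht
        · intro _ P'; rfl

/-- split a walk at the first edge whose type switches from `P` to `Q`. -/
lemma extract_front (hD : ∀ a b, R a b → (P a b ∧ ¬ Q a b) ∨ (Q a b ∧ ¬ P a b)) :
    ∀ {u v : V} (w : RWalk R u v), w.FirstP P →
    w.EdgesP P ∨
    ∃ (x : V) (w₁ : RWalk (fun a b => R a b ∧ P a b) u x) (w₂ : RWalk R x v),
      1 ≤ w₁.length ∧ w₂.FirstP Q ∧
      (∀ z, w₁.mem z → w.mem z) ∧ (∀ z, w₂.mem z → w.mem z) ∧
      w₁.length + w₂.length = w.length ∧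
      (∀ S : V → V → Prop, w₁.EdgesP S → w₂.EdgesP S → w.EdgesP S) ∧
      (∀ P' : V → V → Prop, w.LastP P' ↔ w₂.LastP P')
  | _, _, .nil _, hf => absurd hf (by simp [FirstP])
  | _, _, @cons _ _ u a v e p, hf => by
      have hPe : P u a := hf
      rcases p with _ | @⟨a, b, v, e₂, p₂⟩
      · exact Or.inl ⟨hPe, trivial⟩
      · have hp : RWalk.FirstP P (.cons e₂ p₂) ∨ RWalk.FirstP Q (.cons e₂ p₂) := by
          rcases hD a b e₂ with h | h
          · exact Or.inl h.1
          · exact Or.inr h.1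
        rcases hp with hp | hp
        · rcases extract_front hD (.cons e₂ p₂) hp with hall | hsplit
          · exact Or.inl ⟨hPe, hall⟩
          · obtain ⟨x, w₁, w₂, h1, h2, h3, h4, h5, h6, h7⟩ := hsplit
            refine Or.inr ⟨x, .cons ⟨e, hPe⟩ w₁, w₂, by simp [length], h2, ?_, ?_, ?_, ?_, ?_⟩
            · rintro z (rfl | hz)
              · exact Or.inl rfl
              · exact Or.inr (h3 z hz)
            · intro z hz; exact Or.inr (h4 z hz)
            · simp only [length] at h5 ⊢; omega
            · intro S hS1 hS2
              exact ⟨hS1.1, h6 S hS1.2 hS2⟩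
            · intro P'
              rw [lastP_cons e _ (by simp [length]), h7]
        · refine Or.inr ⟨a, .cons ⟨e, hPe⟩ (.nil a), .cons e₂ p₂, by simp [length], hp, ?_, ?_,
            by simp [length]; omega, ?_, ?_⟩
          · rintro z (rfl | rfl)
            · exact Or.inl rfl
            · exact Or.inr (Or.inl rfl)
          · intro z hz; exact Or.inr hz
          · intro S hS1 hS2; exact ⟨hS1.1, hS2⟩
          · intro P'
            rw [lastP_cons e _ (by simp [length])]

lemma edgesP_and : ∀ {u v : V} (w : RWalk R u v), w.EdgesP P → w.EdgesP Q →
    w.EdgesP (fun a b => P a b ∧ Q a b)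
  | _, _, .nil _, _, _ => trivial
  | _, _, .cons _ p, hP, hQ => ⟨⟨hP.1, hQ.1⟩, edgesP_and p hP.2 hQ.2⟩

lemma edgesP_self : ∀ {u v : V} (w : RWalk R u v), w.EdgesP R :=
  fun w => edgesP_of_rel (fun _ _ h => h) w

end RWalk
end SplitRP
namespace SplitRP
namespace RWalk
variable {V : Type*} {R P Q : V → V → Prop}

lemma firstP_append {u v w : V} (p : RWalk R u v) (q : RWalk R v w) (hp : 1 ≤ p.length) :
    (p.append q).FirstP P ↔ p.FirstP P := by
  cases p
  · simp [length] at hp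
  · rfl

lemma lastP_append : ∀ {u v w : V} (p : RWalk R u v) (q : RWalk R v w), 1 ≤ q.length →
    ((p.append q).LastP P ↔ q.LastP P)
  | _, _, _, .nil _, q, hq => Iff.rfl
  | _, _, _, .cons e p', q, hq => by
      have h1 : 1 ≤ (p'.append q).length := by
        rw [length_append]; omega
      show ((RWalk.cons e (p'.append q)).LastP P ↔ q.LastP P)
      rw [lastP_cons e _ h1, lastP_append p' q hq]

/-- split at an adjacent (Q-edge, P-edge) pair. -/
lemma hasQP_split : ∀ {u v : V} (w : RWalk R u v), w.HasQP Q P →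
    ∃ (m : V) (w₁ : RWalk R u m) (w₂ : RWalk R m v),
      1 ≤ w₁.length ∧ w₁.LastP Q ∧ w₂.FirstP P ∧ w₁.length + w₂.length = w.length
  | _, _, .nil _, h => absurd h (by simp [HasQP])
  | _, _, @cons _ _ u a v e p, h => by
      rcases h with ⟨hQ, hP⟩ | h
      · exact ⟨a, .cons e (.nil a), p, by simp [length], hQ, hP, by simp [length]; omega⟩
      · obtain ⟨m, w₁, w₂, h1, h2, h3, h4⟩ := hasQP_split p h
        refine ⟨m, .cons e w₁, w₂, by simp [length], ?_, h3, by simp only [length]; omega⟩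
        rw [lastP_cons e _ h1]
        exact h2

lemma hasE_of_firstP {u v : V} {w : RWalk R u v} (h : w.FirstP P) : w.HasE P := by
  cases w
  · exact absurd h (by simp [FirstP])
  · exact Or.inl h

/-- without a (Q,P)-junction, a walk starting with a Q edge has no P edge. -/
lemma no_P_of_noQP (hExcl : ∀ a b, R a b → ¬ (P a b ∧ Q a b))
    (hTot : ∀ a b, R a b → P a b ∨ Q a b) :
    ∀ {u v : V} (w : RWalk R u v), ¬ w.HasQP Q P → w.FirstP Q → ¬ w.HasE P
  | _, _, .nil _, _, hf => absurd hf (by simp [FirstP])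
  | _, _, @cons _ _ u a v e p, hn, hf => by
      intro hE
      rcases hE with hPe | hE
      · exact hExcl _ _ e ⟨hPe, hf⟩
      · rcases p with _ | @⟨a, b, v, e₂, p₂⟩
        · simp [HasE] at hE
        · have hQ2 : Q a b := by
            rcases hTot a b e₂ with h | h
            · exact absurd (Or.inl ⟨hf, h⟩) hn
            · exact h
          have hn2 : ¬ (RWalk.cons e₂ p₂).HasQP Q P := fun hh => hn (Or.inr hh)
          exact no_P_of_noQP hExcl hTot (.cons e₂ p₂) hn2 hQ2 hE

/-- without a (Q,P)-junction, a Q-edge-containing walk ends with a Q edge. -/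
lemma lastQ_of_noQP (hExcl : ∀ a b, R a b → ¬ (P a b ∧ Q a b))
    (hTot : ∀ a b, R a b → P a b ∨ Q a b) :
    ∀ {u v : V} (w : RWalk R u v), ¬ w.HasQP Q P → w.HasE Q → w.LastP Q
  | _, _, .nil _, _, hE => absurd hE (by simp [HasE])
  | _, _, @cons _ _ u a v e p, hn, hE => by
      rcases p with _ | @⟨a, b, v, e₂, p₂⟩
      · rcases hE with h | h
        · exact h
        · simp [HasE] at h
      · have hn2 : ¬ (RWalk.cons e₂ p₂).HasQP Q P := fun hh => hn (Or.inr hh)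
        have hEp : (RWalk.cons e₂ p₂).HasE Q := by
          rcases hE with hQe | hEp
          · -- first edge is Q; then the next edge cannot be P
            rcases hTot a b e₂ with h | h
            · exact absurd (Or.inl ⟨hQe, h⟩) hn
            · exact Or.inl h
          · exact hEp
        rw [lastP_cons e _ (by simp [length])]
        exact lastQ_of_noQP hExcl hTot (.cons e₂ p₂) hn2 hEp

/-- a closed walk with both edge types can be rotated to start with a `P` edge and
end with a `Q` edge. -/
lemma rotate_PQ (hExcl : ∀ a b, R a b → ¬ (P a b ∧ Q a b))
    (hTot : ∀ a b, R a b → P a b ∨ Q a b)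
    {v : V} (w : RWalk R v v) (hP : w.HasE P) (hQ : w.HasE Q) :
    ∃ (x : V) (w' : RWalk R x x), w'.length = w.length ∧ w'.FirstP P ∧ w'.LastP Q := by
  by_cases hj : w.HasQP Q P
  · obtain ⟨m, w₁, w₂, h1, h2, h3, h4⟩ := hasQP_split w hj
    refine ⟨m, w₂.append w₁, by rw [length_append]; omega, ?_, ?_⟩
    · rw [firstP_append w₂ w₁ (firstP_length h3)]
      exact h3
    · rw [lastP_append w₂ w₁ h1]
      exact h2
  · have hfirst : w.FirstP P := by
      rcases w with _ | @⟨v, a, v, e, p⟩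
      · exact absurd hP (by simp [HasE])
      · rcases hTot _ _ e with h | h
        · exact h
        · exact absurd (no_P_of_noQP hExcl hTot _ hj h hP) (fun hh => hh)
    exact ⟨v, w, rfl, hfirst, lastQ_of_noQP hExcl hTot w hj hQ⟩

/-- extract the maximal trailing run of Q edges. -/
lemma extract_back (hTot : ∀ a b, R a b → P a b ∨ Q a b)
    (hExcl : ∀ a b, R a b → ¬ (P a b ∧ Q a b)) :
    ∀ {u v : V} (w : RWalk R u v), w.LastP Q →
    w.EdgesP Q ∨
    ∃ (x : V) (w₁ : RWalk R u x) (w₂ : RWalk (fun a b => R a b ∧ Q a b) x v),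
      1 ≤ w₂.length ∧ w₁.LastP P ∧
      (∀ z, w₁.mem z → w.mem z) ∧ (∀ z, w₂.mem z → w.mem z) ∧
      w₁.length + w₂.length = w.length ∧
      (∀ S : V → V → Prop, w₁.EdgesP S → w₂.EdgesP S → w.EdgesP S) ∧
      (∀ P' : V → V → Prop, w.FirstP P' ↔ w₁.FirstP P')
  | _, _, .nil _, hl => absurd hl (by simp [LastP])
  | _, _, @cons _ _ u a v e p, hl => by
      rcases p with _ | @⟨a, b, v, e₂, p₂⟩
      · exact Or.inl ⟨hl, trivial⟩
      · have hlp : (RWalk.cons e₂ p₂).LastP Q := by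
          rw [lastP_cons e _ (by simp [length])] at hl
          exact hl
        rcases extract_back hTot hExcl (.cons e₂ p₂) hlp with hall | hsplit
        · rcases hTot _ _ e with hPe | hQe
          · -- the switch is right here
            refine Or.inr ⟨a, .cons e (.nil a), (RWalk.cons e₂ p₂).transfer
              (edgesP_and _ (edgesP_self _) hall), by
                rw [length_transfer]; simp [length], hPe, ?_, ?_, ?_, ?_, ?_⟩
            · rintro z (rfl | rfl)
              · exact Or.inl rfl
              · exact Or.inr (Or.inl rfl)
            · intro z hz
              rw [mem_transfer] at hz
              exact Or.inr hz
            · rw [length_transfer]; simp [length]; omega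
            · intro S h1 h2
              rw [edgesP_transfer] at h2
              exact ⟨h1.1, h2⟩
            · intro P'; rfl
          · exact Or.inl ⟨hQe, hall⟩
        · obtain ⟨x, w₁, w₂, h1, h2, h3, h4, h5, h6, h7⟩ := hsplit
          refine Or.inr ⟨x, .cons e w₁, w₂, h1, ?_, ?_, fun z hz => Or.inr (h4 z hz),
            by simp only [length] at h5 ⊢; omega, ?_, ?_⟩
          · rw [lastP_cons e _ (lastP_length h2)]
            exact h2
          · rintro z (rfl | hz)
            · exact Or.inl rfl
            · exact Or.inr (h3 z hz)
          · intro S hS1 hS2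
            exact ⟨hS1.1, h6 S hS1.2 hS2⟩
          · intro P'
            exact Iff.rfl

end RWalk
end SplitRP
namespace SplitRP

variable {n : ℕ}

def rectF (o : Obs n) : Finset (Fin n × Fin n) := o.2.1 ×ˢ o.2.2

lemma mem_rectF {o : Obs n} {p : Fin n × Fin n} :
    p ∈ rectF o ↔ p.1 ∈ o.2.1 ∧ p.2 ∈ o.2.2 := Finset.mem_product

/-- row-type edges: the column (second coordinate) is preserved. -/
def RowE (v w : SVert n) : Prop := v.1.2 = w.1.2
/-- column-type edges: the row (first coordinate) is preserved. -/
def ColE (v w : SVert n) : Prop := v.1.1 = w.1.1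

variable (T : Finset (Obs n))

def rOK (p : Fin n × Fin n) (t : Option Bool) : Prop :=
  (t = some true ∧ p ∈ crossingChoices T) ∨ (t = none ∧ p ∉ crossingChoices T)

def cOK (p : Fin n × Fin n) (t : Option Bool) : Prop :=
  (t = some false ∧ p ∈ crossingChoices T) ∨ (t = none ∧ p ∉ crossingChoices T)

def RowStep (o : Obs n) (v w : SVert n) : Prop :=
  o ∈ T ∧ v.1 = o.1 ∧ w.1.1 ∈ o.2.1 ∧ w.1.1 ≠ o.1.1 ∧ w.1.2 = o.1.2 ∧
    rOK T v.1 v.2 ∧ rOK T w.1 w.2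

def ColStep (o : Obs n) (v w : SVert n) : Prop :=
  o ∈ T ∧ w.1 = o.1 ∧ v.1.1 = o.1.1 ∧ v.1.2 ∈ o.2.2 ∧ v.1.2 ≠ o.1.2 ∧
    cOK T v.1 v.2 ∧ cOK T w.1 w.2

/-- The (bounded) edge relation of our graph. -/
def EB (Bnd : Finset (Fin n × Fin n)) (v w : SVert n) : Prop :=
  ∃ o : Obs n, (RowStep T o v w ∨ ColStep T o v w) ∧ rectF o ⊆ Bnd

def noncrossO (o : Obs n) : Prop := ∀ o' ∈ T, ¬ Cross o.2 o'.2

variable {T}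

lemma rOK_ne_false {p t} (h : rOK T p t) : t ≠ some false := by
  rcases h with ⟨rfl, _⟩ | ⟨rfl, _⟩ <;> simp

lemma cOK_ne_true {p t} (h : cOK T p t) : t ≠ some true := by
  rcases h with ⟨rfl, _⟩ | ⟨rfl, _⟩ <;> simp

lemma tag_none_of_rc {p t} (hr : rOK T p t) (hc : cOK T p t) :
    t = none ∧ p ∉ crossingChoices T := by
  rcases hr with ⟨rfl, _⟩ | ⟨rfl, h⟩
  · rcases hc with ⟨h2, _⟩ | ⟨h2, _⟩ <;> simp at h2
  · exact ⟨rfl, h⟩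

lemma notS_noncross {p : Fin n × Fin n} (hp : p ∉ crossingChoices T)
    {o : Obs n} (ho : o ∈ T) (hc : o.1 = p) : noncrossO T o := by
  intro o' ho' hcr
  exact hp ⟨o, ho, hc, o', ho', hcr⟩

lemma nested {o o' : Obs n} (hnc : noncrossO T o) (ho' : o' ∈ T)
    {p : Fin n × Fin n} (hp : p ∈ rectF o) (hp' : p ∈ rectF o') :
    rectF o' ⊆ rectF o ∨ rectF o ⊆ rectF o' := by
  have h := hnc o' ho'
  unfold Cross at h
  by_contra hcon
  push_neg at hcon
  exact h ⟨⟨p, Finset.mem_inter.2 ⟨hp, hp'⟩⟩, fun hs => hcon.2 hs, fun hs => hcon.1 hs⟩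

lemma F2 (huniq : UniqueProp T) {o o' : Obs n} (ho : o ∈ T) (ho' : o' ∈ T)
    (hsub : rectF o' ⊆ rectF o) (hmem : o.1 ∈ rectF o') : o'.1 = o.1 :=
  huniq.2 o ho o' ho' hsub hmem

/-- the key uniqueness trap. -/
lemma trap (huniq : UniqueProp T) {o₁ o₂ : Obs n} (h₁ : o₁ ∈ T) (hnc : noncrossO T o₁) (h₂ : o₂ ∈ T)
    (hch₂ : o₂.1 ∈ rectF o₂)
    (hmem : o₂.1 ∈ rectF o₁) (hne : o₂.1 ≠ o₁.1) : rectF o₂ ⊆ rectF o₁ := by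
  rcases nested hnc h₂ hmem hch₂ with h | h
  · exact h
  · exact absurd (F2 huniq h₂ h₁ h hmem).symm hne

variable {A B : Matrix (Fin n) (Fin n) ℝ}

def alphaF (A : Matrix (Fin n) (Fin n) ℝ) (p : Fin n × Fin n) : ℝ := A p.1 p.2
def betaF (B : Matrix (Fin n) (Fin n) ℝ) (p : Fin n × Fin n) : ℝ := B p.1 p.2

lemma choice_mem_rect (hAB : Rationalizes A B T) {o : Obs n} (ho : o ∈ T) : o.1 ∈ rectF o := by
  obtain ⟨h1, h2, _, _⟩ := hAB o ho
  exact mem_rectF.2 ⟨h1, h2⟩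

lemma rowStep_facts (hAB : Rationalizes A B T) {o : Obs n} {v w : SVert n} (h : RowStep T o v w) :
    o ∈ T ∧ w.1 ∈ rectF o ∧ alphaF A w.1 < alphaF A v.1 ∧ RowE v w ∧ v.1.1 ≠ w.1.1 := by
  obtain ⟨hoT, hv, hwI, hwne, hwj, _, _⟩ := h
  obtain ⟨hI, hJ, hA, _⟩ := hAB o hoT
  have hwr : w.1 ∈ rectF o := mem_rectF.2 ⟨hwI, hwj ▸ hJ⟩
  have halt : alphaF A w.1 < alphaF A v.1 := by
    have := hA w.1.1 hwI hwne
    unfold alphaF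
    rw [hv, hwj]
    exact this
  refine ⟨hoT, hwr, halt, ?_, ?_⟩
  · unfold RowE; rw [hv, hwj]
  · rw [hv]; exact fun hh => hwne hh.symm

lemma colStep_facts (hAB : Rationalizes A B T) {o : Obs n} {v w : SVert n} (h : ColStep T o v w) :
    o ∈ T ∧ v.1 ∈ rectF o ∧ betaF B v.1 < betaF B w.1 ∧ ColE v w ∧ v.1.2 ≠ w.1.2 := by
  obtain ⟨hoT, hw, hvi, hvJ, hvne, _, _⟩ := h
  obtain ⟨hI, hJ, _, hB⟩ := hAB o hoT
  have hvr : v.1 ∈ rectF o := mem_rectF.2 ⟨hvi ▸ hI, hvJ⟩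
  have hblt : betaF B v.1 < betaF B w.1 := by
    have := hB v.1.2 hvJ hvne
    unfold betaF
    rw [hw, hvi]
    exact this
  refine ⟨hoT, hvr, hblt, ?_, ?_⟩
  · unfold ColE; rw [hw, hvi]
  · rw [hw]; exact hvne

lemma step_dichotomy (hAB : Rationalizes A B T) {Bnd} {v w : SVert n} (h : EB T Bnd v w) :
    ((∃ o, RowStep T o v w ∧ rectF o ⊆ Bnd) ∧ RowE v w ∧ ¬ ColE v w) ∨
    ((∃ o, ColStep T o v w ∧ rectF o ⊆ Bnd) ∧ ColE v w ∧ ¬ RowE v w) := by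
  obtain ⟨o, ho | ho, hb⟩ := h
  · obtain ⟨_, _, _, hre, hne⟩ := rowStep_facts hAB ho
    exact Or.inl ⟨⟨o, ho, hb⟩, hre, fun hc => hne hc⟩
  · obtain ⟨_, _, _, hce, hne⟩ := colStep_facts hAB ho
    refine Or.inr ⟨⟨o, ho, hb⟩, hce, fun hr => hne hr⟩

lemma EB_mono {Bnd Bnd' : Finset (Fin n × Fin n)} (h : Bnd ⊆ Bnd') {v w : SVert n} :
    EB T Bnd v w → EB T Bnd' v w := by
  rintro ⟨o, ho, hb⟩; exact ⟨o, ho, hb.trans h⟩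

end SplitRP
namespace SplitRP
open RWalk

variable {n : ℕ} {T : Finset (Obs n)} {A B : Matrix (Fin n) (Fin n) ℝ}

lemma merge2 {o o' : Obs n} (ho' : o' ∈ T) (hnc : noncrossO T o)
    {q : Fin n × Fin n} (hq : q ∈ rectF o) (hq' : q ∈ rectF o') :
    ∃ m : Obs n, (m = o ∨ m = o') ∧ rectF o ⊆ rectF m ∧ rectF o' ⊆ rectF m := by
  rcases nested hnc ho' hq hq' with h | h
  · exact ⟨o, Or.inl rfl, subset_rfl, h⟩
  · exact ⟨o', Or.inr rfl, h, subset_rfl⟩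

/-- The abstract run lemma: a chain of steps going from a choice into its own
subgame stays inside the subgame of a non-crossing anchor observation. -/
lemma run_aux (huniq : UniqueProp T) {γf : (Fin n × Fin n) → ℝ}
    {stp : Obs n → SVert n → SVert n → Prop}
    (hstp : ∀ o v w, stp o v w → o ∈ T ∧ v.1 = o.1 ∧ v.1 ∈ rectF o ∧ w.1 ∈ rectF o ∧
      γf w.1 < γf v.1)
    {o₁ : Obs n} (ho₁ : o₁ ∈ T) (hnc : noncrossO T o₁) :
    ∀ {v vend : SVert n} (w : RWalk (fun a b => ∃ o, stp o a b) v vend),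
      v.1 ∈ rectF o₁ → γf v.1 < γf o₁.1 →
      (∀ z, w.mem z → z.1 ∈ rectF o₁ ∧ γf z.1 < γf o₁.1) ∧
      w.EdgesP (fun a b => ∃ o, stp o a b ∧ rectF o ⊆ rectF o₁)
  | _, _, .nil v, hv, hγ => by
      constructor
      · rintro z rfl; exact ⟨hv, hγ⟩
      · trivial
  | _, _, @RWalk.cons _ _ v b _ e p, hv, hγ => by
      obtain ⟨o₂, h₂⟩ := e
      obtain ⟨h₂T, h₂v, h₂ch, h₂w, h₂γ⟩ := hstp o₂ v b h₂
      have hne : o₂.1 ≠ o₁.1 := by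
        intro heq
        rw [h₂v, heq] at hγ
        exact lt_irrefl _ hγ
      have hsub : rectF o₂ ⊆ rectF o₁ :=
        trap huniq ho₁ hnc h₂T (h₂v ▸ h₂ch) (h₂v ▸ hv) (h₂v ▸ hne)
      have hb : b.1 ∈ rectF o₁ := hsub h₂w
      have hbγ : γf b.1 < γf o₁.1 := lt_trans h₂γ hγ
      obtain ⟨hmem, hedge⟩ := run_aux huniq hstp ho₁ hnc p hb hbγ
      constructor
      · rintro z (rfl | hz)
        · exact ⟨hv, hγ⟩
        · exact hmem z hz
      · exact ⟨⟨o₂, h₂, hsub⟩, hedge⟩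

/-- A row run whose first vertex is an intact choice stays inside the (non-crossing)
subgame of the first observation. -/
lemma rowrun_anchor (hAB : Rationalizes A B T) (huniq : UniqueProp T)
    {Bnd : Finset (Fin n × Fin n)} {x vend : SVert n}
    (w : RWalk (fun a b => EB T Bnd a b ∧ RowE a b) x vend) (hlen : 1 ≤ w.length)
    (hS : x.1 ∉ crossingChoices T) :
    ∃ f₁ : Obs n, f₁ ∈ T ∧ noncrossO T f₁ ∧ f₁.1 = x.1 ∧ rectF f₁ ⊆ Bnd ∧
      (∀ z, w.mem z → z.1 ∈ rectF f₁) ∧ w.EdgesP (EB T (rectF f₁)) := by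
  rcases w with _ | @⟨x, b, vend, e, p⟩
  · simp [RWalk.length] at hlen
  · obtain ⟨f₁, hf₁, hfb⟩ : ∃ o, RowStep T o x b ∧ rectF o ⊆ Bnd := by
      rcases step_dichotomy hAB e.1 with ⟨h, _, _⟩ | ⟨_, _, hnr⟩
      · exact h
      · exact absurd e.2 hnr
    have hfT := hf₁.1
    have hch : f₁.1 = x.1 := hf₁.2.1.symm
    have hnc : noncrossO T f₁ := notS_noncross (hch ▸ hS) hfT rfl
    obtain ⟨_, hbr, hbα, _, _⟩ := rowStep_facts hAB hf₁
    -- convert the tail to an abstract step walk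
    have hpE : p.EdgesP (fun a b => ∃ o, RowStep T o a b ∧ rectF o ⊆ Bnd) := by
      refine edgesP_of_rel ?_ p
      intro a c hac
      rcases step_dichotomy hAB hac.1 with ⟨h, _, _⟩ | ⟨_, _, hnr⟩
      · exact h
      · exact absurd hac.2 hnr
    set p' := p.transfer hpE with hp'
    have hαx : alphaF A b.1 < alphaF A f₁.1 := by rw [hch]; exact hbα
    obtain ⟨hmem, hedge⟩ := run_aux huniq
      (stp := fun o a c => RowStep T o a c ∧ rectF o ⊆ Bnd) (γf := alphaF A)
      (fun o a c h => by
        obtain ⟨hT', hwI, hα, _, _⟩ := rowStep_facts hAB h.1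
        exact ⟨hT', h.1.2.1, h.1.2.1 ▸ choice_mem_rect hAB hT', hwI, hα⟩)
      hfT hnc p' hbr hαx
    refine ⟨f₁, hfT, hnc, hch, hfb, ?_, ?_⟩
    · rintro z (rfl | hz)
      · rw [← hch]; exact choice_mem_rect hAB hfT
      · exact (hmem z ((mem_transfer p hpE z).2 hz)).1
    · refine ⟨⟨f₁, Or.inl hf₁, subset_rfl⟩, ?_⟩
      have := (edgesP_transfer p hpE).1 hedge
      exact edgesP_mono (fun a c ⟨o, ho, hsub⟩ => ⟨o, Or.inl ho.1, hsub⟩) p this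

/-- A column run whose last vertex is an intact choice stays inside the (non-crossing)
subgame of the last observation. -/
lemma colrun_anchor (hAB : Rationalizes A B T) (huniq : UniqueProp T)
    {Bnd : Finset (Fin n × Fin n)} {u x : SVert n}
    (w : RWalk (fun a b => EB T Bnd a b ∧ ColE a b) u x) (hlen : 1 ≤ w.length)
    (hS : x.1 ∉ crossingChoices T) :
    ∃ e₁ : Obs n, e₁ ∈ T ∧ noncrossO T e₁ ∧ e₁.1 = x.1 ∧ rectF e₁ ⊆ Bnd ∧
      (∀ z, w.mem z → z.1 ∈ rectF e₁) ∧ w.EdgesP (EB T (rectF e₁)) := by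
  have hrl : 1 ≤ w.reverse.length := by rw [length_reverse]; exact hlen
  rcases hw : w.reverse with _ | @⟨x, y, u, e, q⟩
  · rw [hw] at hrl; simp [RWalk.length] at hrl
  · -- e : flip rel x y, i.e. an edge y → x in the original walk
    obtain ⟨e₁, he₁, heb⟩ : ∃ o, ColStep T o y x ∧ rectF o ⊆ Bnd := by
      rcases step_dichotomy hAB e.1 with ⟨_, _, hnc'⟩ | ⟨h, _, _⟩
      · exact absurd e.2 hnc'
      · exact h
    have heT := he₁.1
    have hch : e₁.1 = x.1 := he₁.2.1.symm
    have hnc : noncrossO T e₁ := notS_noncross (hch ▸ hS) heT rfl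
    obtain ⟨_, hyr, hyβ, _, _⟩ := colStep_facts hAB he₁
    have hqE : q.EdgesP (fun a b => ∃ o, ColStep T o b a ∧ rectF o ⊆ Bnd) := by
      refine edgesP_of_rel ?_ q
      intro a c hac
      rcases step_dichotomy hAB hac.1 with ⟨_, _, hnc'⟩ | ⟨h, _, _⟩
      · exact absurd hac.2 hnc'
      · exact h
    set q' := q.transfer hqE
    have hβx : betaF B y.1 < betaF B e₁.1 := by rw [hch]; exact hyβ
    obtain ⟨hmem, hedge⟩ := run_aux huniq
      (stp := fun o a c => ColStep T o c a ∧ rectF o ⊆ Bnd) (γf := betaF B)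
      (fun o a c h => by
        obtain ⟨hT', hvr, hβ, _, _⟩ := colStep_facts hAB h.1
        exact ⟨hT', h.1.2.1, h.1.2.1 ▸ choice_mem_rect hAB hT', hvr, hβ⟩)
      heT hnc q' hyr hβx
    have hmemw : ∀ z, w.mem z → z = x ∨ q.mem z := by
      intro z hz
      have : w.reverse.mem z := (mem_reverse w z).2 hz
      rw [hw] at this
      exact this
    refine ⟨e₁, heT, hnc, hch, heb, ?_, ?_⟩
    · intro z hz
      rcases hmemw z hz with rfl | hz'
      · rw [← hch]; exact choice_mem_rect hAB heT
      · exact (hmem z ((mem_transfer q hqE z).2 hz')).1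
    · -- edges of w.reverse all satisfy the flipped bounded relation
      have hrevE : w.reverse.EdgesP (fun a b => EB T (rectF e₁) b a) := by
        rw [hw]
        refine ⟨⟨e₁, Or.inr he₁, subset_rfl⟩, ?_⟩
        have := (edgesP_transfer q hqE).1 hedge
        exact edgesP_mono (fun a c ⟨o, ho, hsub⟩ => ⟨o, Or.inr ho.1, hsub⟩) q this
      exact edgesP_of_reverse w hrevE

end SplitRP
namespace SplitRP
open RWalk

variable {n : ℕ} {T : Finset (Obs n)} {A B : Matrix (Fin n) (Fin n) ℝ}

lemma hD_col (hAB : Rationalizes A B T) {Bnd : Finset (Fin n × Fin n)} :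
    ∀ a b : SVert n, EB T Bnd a b → (ColE a b ∧ ¬ RowE a b) ∨ (RowE a b ∧ ¬ ColE a b) := by
  intro a b h
  rcases step_dichotomy hAB h with ⟨_, h1, h2⟩ | ⟨_, h1, h2⟩
  · exact Or.inr ⟨h1, h2⟩
  · exact Or.inl ⟨h1, h2⟩

lemma hD_row (hAB : Rationalizes A B T) {Bnd : Finset (Fin n × Fin n)} :
    ∀ a b : SVert n, EB T Bnd a b → (RowE a b ∧ ¬ ColE a b) ∨ (ColE a b ∧ ¬ RowE a b) := by
  intro a b h
  rcases step_dichotomy hAB h with ⟨_, h1, h2⟩ | ⟨_, h1, h2⟩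
  · exact Or.inl ⟨h1, h2⟩
  · exact Or.inr ⟨h1, h2⟩

/-- no edge is simultaneously a row and a column edge. -/
lemma not_row_and_col (hAB : Rationalizes A B T) {Bnd : Finset (Fin n × Fin n)}
    {a b : SVert n} (h : EB T Bnd a b) (hr : RowE a b) (hc : ColE a b) : False := by
  rcases step_dichotomy hAB h with ⟨_, _, h2⟩ | ⟨_, _, h2⟩
  · exact h2 hc
  · exact h2 hr

/-- **Chain lemma.** Any walk which starts with a column edge and ends with a row edge
is confined to the subgame of a single non-crossing observation whose (intact) choice
it visits. -/
lemma lemmaE (hAB : Rationalizes A B T) (huniq : UniqueProp T) :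
    ∀ (N : ℕ) {Bnd : Finset (Fin n × Fin n)} {u vend : SVert n}
      (w : RWalk (EB T Bnd) u vend), w.length ≤ N →
      w.FirstP ColE → w.LastP RowE →
      ∃ oM : Obs n, oM ∈ T ∧ noncrossO T oM ∧ rectF oM ⊆ Bnd ∧ oM.1 ∉ crossingChoices T ∧
        w.mem (oM.1, (none : Option Bool)) ∧ u.1 ∈ rectF oM ∧ vend.1 ∈ rectF oM ∧
        w.EdgesP (EB T (rectF oM)) := by
  intro N
  induction N with
  | zero =>
      intro Bnd u vend w hlen hfirst _
      have := firstP_length hfirst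
      omega
  | succ N ih =>
      intro Bnd u vend w hlen hfirst hlast
      -- extract the leading column run
      rcases extract_front (hD_col hAB) w hfirst with hall | hsplit
      · -- all edges are column edges: contradicts the last edge being a row edge
        exfalso
        obtain ⟨z, w', e, _, _, hlastiff, _, hsplitE, _, _⟩ :=
          snoc_decomp (x := u) w (firstP_length hfirst)
        have hre : RowE z vend := (hlastiff RowE).1 hlast
        have hce : ColE z vend := (hsplitE ColE hall).2
        exact not_row_and_col hAB e hre hce
      obtain ⟨x, w₁, w₂, hl1, hf2, hm1, hm2, hlensum, hbuild, hlastiff⟩ := hsplit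
      have hlast2 : w₂.LastP RowE := (hlastiff RowE).1 hlast
      -- the corner x: incoming column edge, outgoing row edge
      obtain ⟨z₁, w₁', e₁, _, _, _, _, _, _, _⟩ := snoc_decomp (x := u) w₁ hl1
      obtain ⟨ea, hea, heab⟩ : ∃ o, ColStep T o z₁ x ∧ rectF o ⊆ Bnd := by
        rcases step_dichotomy hAB e₁.1 with ⟨_, _, hnc'⟩ | ⟨h, _, _⟩
        · exact absurd e₁.2 hnc'
        · exact h
      have hcx : cOK T x.1 x.2 := hea.2.2.2.2.2.2
      have hrx : rOK T x.1 x.2 := by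
        rcases w₂ with _ | @⟨x, y, vend, e₂, p₂⟩
        · exact absurd hf2 (by simp [FirstP])
        · obtain ⟨f, hf, _⟩ : ∃ o, RowStep T o x y ∧ rectF o ⊆ Bnd := by
            rcases step_dichotomy hAB e₂ with ⟨h, _, _⟩ | ⟨_, _, hnr⟩
            · exact h
            · exact absurd hf2 hnr
          exact hf.2.2.2.2.2.1
      obtain ⟨hxnone, hxS⟩ := tag_none_of_rc hrx hcx
      have hxeq : x = (x.1, (none : Option Bool)) := by
        cases x; simp_all
      -- anchor the column run
      obtain ⟨ea', heaT, heanc, heach, heab', hmea, hEea⟩ :=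
        colrun_anchor hAB huniq w₁ hl1 hxS
      -- extract the row run from w₂
      rcases extract_front (hD_row hAB) w₂ hf2 with hall2 | hsplit2
      · -- row run till the end
        have hw2and : w₂.EdgesP (fun a b => EB T Bnd a b ∧ RowE a b) :=
          edgesP_and w₂ (edgesP_self w₂) hall2
        obtain ⟨f₁, hfT, hfnc, hfch, hfb, hmf, hEf⟩ :=
          rowrun_anchor hAB huniq (w₂.transfer hw2and)
            (by rw [length_transfer]; exact firstP_length hf2) hxS
        obtain ⟨m, hmcase, hsub1, hsub2⟩ := merge2 (o := ea') (o' := f₁) hfT heanc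
          (heach ▸ choice_mem_rect hAB heaT) (hfch ▸ choice_mem_rect hAB hfT)
        have hmT : m ∈ T := by rcases hmcase with rfl | rfl; exacts [heaT, hfT]
        have hmnc : noncrossO T m := by rcases hmcase with rfl | rfl; exacts [heanc, hfnc]
        have hmb : rectF m ⊆ Bnd := by rcases hmcase with rfl | rfl; exacts [heab', hfb]
        have hmch : m.1 = x.1 := by rcases hmcase with rfl | rfl; exacts [heach, hfch]
        refine ⟨m, hmT, hmnc, hmb, hmch ▸ hxS, ?_, ?_, ?_, ?_⟩
        · rw [hmch, ← hxeq]; exact hm1 x w₁.mem_right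
        · exact hsub1 (hmea u w₁.mem_left)
        · refine hsub2 (hmf vend ?_)
          rw [mem_transfer]; exact w₂.mem_right
        · refine hbuild _ ?_ ?_
          · exact edgesP_mono (fun a b h => EB_mono hsub1 h) w₁ hEea
          · have := (edgesP_transfer w₂ hw2and).1 hEf
            exact edgesP_mono (fun a b h => EB_mono hsub2 h) w₂ this
      · -- row run, then a further walk starting with a column edge
        obtain ⟨xb, w₃, w₄, hl3, hf4, hm3, hm4, hlensum2, hbuild2, hlastiff2⟩ := hsplit2
        have hlast4 : w₄.LastP RowE := (hlastiff2 RowE).1 hlast2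
        have hlen4 : w₄.length ≤ N := by omega
        obtain ⟨oM, hoT, honc, hob, hoS, homem, hoxb, hovend, hoE⟩ :=
          ih w₄ hlen4 hf4 hlast4
        -- anchor the row run w₃
        obtain ⟨f₁, hfT, hfnc, hfch, hfb, hmf, hEf⟩ :=
          rowrun_anchor hAB huniq w₃ hl3 hxS
        obtain ⟨m₁, hm1case, hsub1, hsub2⟩ := merge2 (o := ea') (o' := f₁) hfT heanc
          (heach ▸ choice_mem_rect hAB heaT) (hfch ▸ choice_mem_rect hAB hfT)
        have hm₁T : m₁ ∈ T := by rcases hm1case with rfl | rfl; exacts [heaT, hfT]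
        have hm₁nc : noncrossO T m₁ := by rcases hm1case with rfl | rfl; exacts [heanc, hfnc]
        have hm₁b : rectF m₁ ⊆ Bnd := by rcases hm1case with rfl | rfl; exacts [heab', hfb]
        have hm₁ch : m₁.1 = x.1 := by rcases hm1case with rfl | rfl; exacts [heach, hfch]
        obtain ⟨m, hmcase, hsubm1, hsubm2⟩ := merge2 (o := m₁) (o' := oM) hoT hm₁nc
          (hsub2 (hmf xb w₃.mem_right)) hoxb
        have hmT : m ∈ T := by rcases hmcase with rfl | rfl; exacts [hm₁T, hoT]
        have hmnc : noncrossO T m := by rcases hmcase with rfl | rfl; exacts [hm₁nc, honc]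
        have hmb : rectF m ⊆ Bnd := by rcases hmcase with rfl | rfl; exacts [hm₁b, hob]
        refine ⟨m, hmT, hmnc, hmb, ?_, ?_, ?_, ?_, ?_⟩
        · rcases hmcase with rfl | rfl
          · exact hm₁ch ▸ hxS
          · exact hoS
        · rcases hmcase with rfl | rfl
          · rw [hm₁ch, ← hxeq]; exact hm1 x w₁.mem_right
          · exact hm2 _ (hm4 _ homem)
        · exact hsubm1 (hsub1 (hmea u w₁.mem_left))
        · exact hsubm2 hovend
        · refine hbuild _ ?_ (hbuild2 _ ?_ ?_)
          · exact edgesP_mono (fun a b h => EB_mono (hsub1.trans hsubm1) h) w₁ hEea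
          · exact edgesP_mono (fun a b h => EB_mono (hsub2.trans hsubm1) h) w₃ hEf
          · exact edgesP_mono (fun a b h => EB_mono hsubm2 h) w₄ hoE

end SplitRP
namespace SplitRP
open RWalk

variable {n : ℕ} {T : Finset (Obs n)} {A B : Matrix (Fin n) (Fin n) ℝ}

lemma tag_none_of_ne {t : Option Bool} (h1 : t ≠ some false) (h2 : t ≠ some true) :
    t = none := by
  match t with
  | none => rfl
  | some true => exact absurd rfl h2
  | some false => exact absurd rfl h1

/-- **Visiting lemma.** A walk which starts in column `c.2` (at a non-C vertex)
and ends in row `c.1` (at a non-R vertex) visits the intact vertex over `c`,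
provided every observation within the bound containing `c` has choice `c`. -/
lemma inv2 (hAB : Rationalizes A B T) (huniq : UniqueProp T) :
    ∀ (N : ℕ) {Bnd : Finset (Fin n × Fin n)} {c : Fin n × Fin n}
      (_ : ∀ o ∈ T, rectF o ⊆ Bnd → c ∈ rectF o → o.1 = c)
      {u vend : SVert n} (w : RWalk (EB T Bnd) u vend), w.length ≤ N →
      u.1.2 = c.2 → u.2 ≠ some false → vend.1.1 = c.1 → vend.2 ≠ some true →
      w.mem (c, (none : Option Bool)) := by
  intro N
  induction N with
  | zero =>
      intro Bnd c hH u vend w hlen hu1 hu2 hv1 hv2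
      rcases w with _ | @⟨u, y, vend, e, p⟩
      · have h1 : c = u.1 := (Prod.ext hv1 hu1).symm
        have h2 : (none : Option Bool) = u.2 := (tag_none_of_ne hu2 hv2).symm
        show (c, (none : Option Bool)) = u
        rw [h1, h2]
      · simp only [length] at hlen; omega
  | succ N ih =>
      intro Bnd c hH u vend w hlen hu1 hu2 hv1 hv2
      rcases hw : w with _ | @⟨u, y, vend, e, p⟩
      · have h1 : c = u.1 := (Prod.ext hv1 hu1).symm
        have h2 : (none : Option Bool) = u.2 := (tag_none_of_ne hu2 hv2).symm
        show (c, (none : Option Bool)) = u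
        rw [h1, h2]
      · rcases step_dichotomy hAB e with ⟨⟨o, ho, _⟩, hre, _⟩ | ⟨_, hce, _⟩
        · -- first edge is a row edge: drop it
          have hy1 : y.1.2 = c.2 := by
            have : u.1.2 = y.1.2 := hre
            rw [← this]; exact hu1
          have hy2 : y.2 ≠ some false := rOK_ne_false ho.2.2.2.2.2.2
          have hlenp : p.length ≤ N := by
            rw [hw] at hlen
            simp only [length] at hlen; omega
          exact Or.inr (ih hH p hlenp hy1 hy2 hv1 hv2)
        · -- first edge is a column edge: look at the last edge
          have hwlen : 1 ≤ w.length := by rw [hw]; simp [length]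
          obtain ⟨z, w', e', hlen', hmem', hlastiff, _, _, _, _⟩ :=
            snoc_decomp (x := u) w hwlen
          rcases step_dichotomy hAB e' with ⟨⟨o, ho, _⟩, hre2, _⟩ | ⟨⟨o, ho, _⟩, hce2, _⟩
          · -- last edge is a row edge: apply the chain lemma
            have hfirst : w.FirstP ColE := by rw [hw]; exact hce
            have hlast : w.LastP RowE := (hlastiff RowE).2 hre2
            obtain ⟨oM, hoT, _, hob, _, homem, hum, hvm, _⟩ :=
              lemmaE hAB huniq w.length w le_rfl hfirst hlast
            have hcm : c ∈ rectF oM := by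
              refine mem_rectF.2 ⟨?_, ?_⟩
              · rw [← hv1]; exact (mem_rectF.1 hvm).1
              · rw [← hu1]; exact (mem_rectF.1 hum).2
            have := hH oM hoT hob hcm
            rw [← hw]
            exact this ▸ homem
          · -- last edge is a column edge: drop it
            have hz1 : z.1.1 = c.1 := by
              have : z.1.1 = vend.1.1 := hce2
              rw [this]; exact hv1
            have hz2 : z.2 ≠ some true := cOK_ne_true ho.2.2.2.2.2.1
            have hlenw' : w'.length ≤ N := by
              rw [hw] at hlen hlen'
              simp only [length] at hlen' hlen
              omega
            have := ih hH w' hlenw' hu1 hu2 hz1 hz2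
            rw [← hw]
            exact hmem' _ this
end SplitRP
namespace SplitRP
namespace RWalk
variable {V : Type*} {R : V → V → Prop}

lemma eq_of_length_zero : ∀ {u v : V} (w : RWalk R u v), w.length = 0 → u = v
  | _, _, .nil _, _ => rfl
  | _, _, .cons _ _, h => by simp [length] at h

end RWalk

open RWalk

lemma transGen_walk {V : Type*} {R : V → V → Prop} {a b : V} (h : Relation.TransGen R a b) :
    Nonempty {w : RWalk R a b // 1 ≤ w.length} := by
  induction h with
  | single h => exact ⟨⟨.cons h (.nil _), by simp [RWalk.length]⟩⟩
  | tail _ h ih =>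
      obtain ⟨⟨w, hw⟩⟩ := ih
      exact ⟨⟨w.append (.cons h (.nil _)), by rw [length_append]; omega⟩⟩

variable {n : ℕ} {T : Finset (Obs n)} {A B : Matrix (Fin n) (Fin n) ℝ}

lemma all_row_decrease (hAB : Rationalizes A B T) {Bnd : Finset (Fin n × Fin n)} :
    ∀ {u v : SVert n} (w : RWalk (EB T Bnd) u v), ¬ w.HasE ColE → 1 ≤ w.length →
      alphaF A v.1 < alphaF A u.1
  | _, _, .nil _, _, hl => by simp [RWalk.length] at hl
  | _, _, @RWalk.cons _ _ u y v e p, hnc, _ => by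
      obtain ⟨o, ho, _⟩ : ∃ o, RowStep T o u y ∧ rectF o ⊆ Bnd := by
        rcases step_dichotomy hAB e with ⟨h, _, _⟩ | ⟨_, hc, _⟩
        · exact h
        · exact absurd (Or.inl hc) hnc
      obtain ⟨_, _, hα, _, _⟩ := rowStep_facts hAB ho
      rcases p with _ | @⟨y, z, v, e₂, p₂⟩
      · exact hα
      · have hnc2 : ¬ (RWalk.cons e₂ p₂).HasE ColE := fun hh => hnc (Or.inr hh)
        have := all_row_decrease hAB (.cons e₂ p₂) hnc2 (by simp [RWalk.length])
        exact lt_trans this hα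

lemma all_col_increase (hAB : Rationalizes A B T) {Bnd : Finset (Fin n × Fin n)} :
    ∀ {u v : SVert n} (w : RWalk (EB T Bnd) u v), ¬ w.HasE RowE → 1 ≤ w.length →
      betaF B u.1 < betaF B v.1
  | _, _, .nil _, _, hl => by simp [RWalk.length] at hl
  | _, _, @RWalk.cons _ _ u y v e p, hnr, _ => by
      obtain ⟨o, ho, _⟩ : ∃ o, ColStep T o u y ∧ rectF o ⊆ Bnd := by
        rcases step_dichotomy hAB e with ⟨_, hr, _⟩ | ⟨h, _, _⟩
        · exact absurd (Or.inl hr) hnr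
        · exact h
      obtain ⟨_, _, hβ, _, _⟩ := colStep_facts hAB ho
      rcases p with _ | @⟨y, z, v, e₂, p₂⟩
      · exact hβ
      · have hnr2 : ¬ (RWalk.cons e₂ p₂).HasE RowE := fun hh => hnr (Or.inr hh)
        have := all_col_increase hAB (.cons e₂ p₂) hnr2 (by simp [RWalk.length])
        exact lt_trans hβ this

/-- The heart of the matter: the edge relation is acyclic. -/
lemma acyclic_EB (hAB : Rationalizes A B T) (huniq : UniqueProp T) :
    Acyclic (EB T (Finset.univ : Finset (Fin n × Fin n))) := by
  classical
  intro v hv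
  obtain ⟨⟨w₀, hw₀len⟩⟩ := transGen_walk hv
  by_cases hC : w₀.HasE ColE
  swap
  · exact absurd (all_row_decrease hAB w₀ hC hw₀len) (lt_irrefl _)
  by_cases hR : w₀.HasE RowE
  swap
  · exact absurd (all_col_increase hAB w₀ hR hw₀len) (lt_irrefl _)
  obtain ⟨x₀, w, hwlen, hwfirst, hwlast⟩ := rotate_PQ (P := RowE) (Q := ColE)
    (fun a b h hpq => not_row_and_col hAB h hpq.1 hpq.2)
    (fun a b h => by
      rcases step_dichotomy hAB h with ⟨_, h1, _⟩ | ⟨_, h1, _⟩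
      · exact Or.inl h1
      · exact Or.inr h1)
    w₀ hR hC
  have hwlen1 : 1 ≤ w.length := by omega
  -- tags of the base corner x₀
  have hrx : rOK T x₀.1 x₀.2 := by
    rcases w with _ | @⟨x₀, y, x₀', e, p⟩
    · exact absurd hwfirst (by simp [FirstP])
    · obtain ⟨o, ho, _⟩ : ∃ o, RowStep T o x₀ y ∧ rectF o ⊆ Finset.univ := by
        rcases step_dichotomy hAB e with ⟨h, _, _⟩ | ⟨_, _, hnr⟩
        · exact h
        · exact absurd hwfirst hnr
      exact ho.2.2.2.2.2.1
  obtain ⟨z₀, w₀', e₀', _, _, hlastiff0, _, _, _, _⟩ := snoc_decomp (x := x₀) w hwlen1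
  have hcol0 : ColE z₀ x₀ := (hlastiff0 ColE).1 hwlast
  have hcx : cOK T x₀.1 x₀.2 := by
    obtain ⟨o, ho, _⟩ : ∃ o, ColStep T o z₀ x₀ ∧ rectF o ⊆ Finset.univ := by
      rcases step_dichotomy hAB e₀' with ⟨_, _, hnc'⟩ | ⟨h, _, _⟩
      · exact absurd hcol0 hnc'
      · exact h
    exact ho.2.2.2.2.2.2
  obtain ⟨hx0none, hx0S⟩ := tag_none_of_rc hrx hcx
  have hxeq : x₀ = (x₀.1, (none : Option Bool)) := by
    cases x₀; simp_all
  -- extract the leading row run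
  rcases extract_front (hD_row hAB) w hwfirst with hall | hsplit
  · exfalso
    obtain ⟨z, w', e', _, _, hlastiff, _, hsplitE, _, _⟩ := snoc_decomp (x := x₀) w hwlen1
    exact not_row_and_col hAB e' ((hsplitE RowE hall).2) ((hlastiff ColE).1 hwlast)
  obtain ⟨xp, w₃, w₄, hl3, hf4, hm3, hm4, hsum, hbuild, hlastiff⟩ := hsplit
  have hlast4 : w₄.LastP ColE := (hlastiff ColE).1 hwlast
  obtain ⟨f₁, hfT, hfnc, hfch, _, hmf, hEf⟩ := rowrun_anchor hAB huniq w₃ hl3 hx0S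
  -- split off the trailing column run of w₄
  have hMpack : ∃ M : Obs n, M ∈ T ∧ M.1 ∉ crossingChoices T ∧
      w.mem (M.1, (none : Option Bool)) ∧ w.EdgesP (EB T (rectF M)) := by
    rcases extract_back (P := RowE) (Q := ColE)
      (fun a b h => by
        rcases step_dichotomy hAB h with ⟨_, h1, _⟩ | ⟨_, h1, _⟩
        · exact Or.inl h1
        · exact Or.inr h1)
      (fun a b h hpq => not_row_and_col hAB h hpq.1 hpq.2) w₄ hlast4 with hall4 | hsplit4
    · -- w₄ is a pure column run
      have hw4and : w₄.EdgesP (fun a b => EB T Finset.univ a b ∧ ColE a b) :=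
        edgesP_and w₄ (edgesP_self w₄) hall4
      obtain ⟨eE, heT, _, hech, _, hme, hEe⟩ :=
        colrun_anchor hAB huniq (w₄.transfer hw4and)
          (by rw [length_transfer]; exact firstP_length hf4) hx0S
      obtain ⟨M, hMcase, hsub1, hsub2⟩ := merge2 (o := f₁) (o' := eE) heT hfnc
        (hmf xp w₃.mem_right) (hme xp (by rw [mem_transfer]; exact w₄.mem_left))
      have hMT : M ∈ T := by rcases hMcase with rfl | rfl; exacts [hfT, heT]
      have hMch : M.1 = x₀.1 := by rcases hMcase with rfl | rfl; exacts [hfch, hech]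
      refine ⟨M, hMT, hMch ▸ hx0S, ?_, ?_⟩
      · rw [hMch, ← hxeq]; exact w.mem_left
      · refine hbuild _ ?_ ?_
        · exact edgesP_mono (fun a b h => EB_mono hsub1 h) w₃ hEf
        · have := (edgesP_transfer w₄ hw4and).1 hEe
          exact edgesP_mono (fun a b h => EB_mono hsub2 h) w₄ this
    · -- a middle walk, then the trailing column run
      obtain ⟨xc, w₅, w₆, hl6, hlast5, hm5, hm6, hsum2, hbuild2, hfirstiff⟩ := hsplit4
      have hf5 : w₅.FirstP ColE := (hfirstiff ColE).1 hf4
      obtain ⟨oM, hoT, honc, _, hoS, homem, hoxp, hoxc, hoE⟩ :=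
        lemmaE hAB huniq w₅.length w₅ le_rfl hf5 hlast5
      obtain ⟨eE, heT, _, hech, _, hme, hEe⟩ := colrun_anchor hAB huniq w₆ hl6 hx0S
      obtain ⟨m₁, hm1case, hsub1, hsub2⟩ := merge2 (o := f₁) (o' := oM) hoT hfnc
        (hmf xp w₃.mem_right) hoxp
      have hm₁T : m₁ ∈ T := by rcases hm1case with rfl | rfl; exacts [hfT, hoT]
      have hm₁nc : noncrossO T m₁ := by rcases hm1case with rfl | rfl; exacts [hfnc, honc]
      obtain ⟨M, hMcase, hsubm1, hsubm2⟩ := merge2 (o := m₁) (o' := eE) heT hm₁nc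
        (hsub2 hoxc) (hme xc w₆.mem_left)
      have hMT : M ∈ T := by rcases hMcase with rfl | rfl; exacts [hm₁T, heT]
      refine ⟨M, hMT, ?_, ?_, ?_⟩
      · rcases hMcase with rfl | rfl
        · rcases hm1case with rfl | rfl
          · exact hfch ▸ hx0S
          · exact hoS
        · exact hech ▸ hx0S
      · rcases hMcase with rfl | rfl
        · rcases hm1case with rfl | rfl
          · rw [hfch, ← hxeq]; exact w.mem_left
          · exact hm4 _ (hm5 _ homem)
        · rw [hech, ← hxeq]; exact w.mem_left
      · refine hbuild _ ?_ (hbuild2 _ ?_ ?_)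
        · exact edgesP_mono (fun a b h => EB_mono (hsub1.trans hsubm1) h) w₃ hEf
        · exact edgesP_mono (fun a b h => EB_mono (hsub2.trans hsubm1) h) w₅ hoE
        · exact edgesP_mono (fun a b h => EB_mono hsubm2 h) w₆ hEe
  -- the endgame
  obtain ⟨M, hMT, hMS, hMmem, hWE⟩ := hMpack
  set c : Fin n × Fin n := M.1 with hc
  have hH : ∀ o ∈ T, rectF o ⊆ rectF M → c ∈ rectF o → o.1 = c :=
    fun o hoT hsub hmem => F2 huniq hMT hoT hsub hmem
  set xhat : SVert n := (c, (none : Option Bool)) with hxhat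
  have hforce_out : ∀ y : SVert n, EB T (rectF M) xhat y →
      ∃ o, RowStep T o xhat y ∧ rectF o ⊆ rectF M := by
    intro y hy
    rcases step_dichotomy hAB hy with ⟨h, _, _⟩ | ⟨⟨o, ho, hob⟩, _, _⟩
    · exact h
    · exfalso
      obtain ⟨hoT, _, h1, h2, h3, _, _⟩ := ho
      have hcm : c ∈ rectF o := by
        refine mem_rectF.2 ⟨?_, h2⟩
        have := (mem_rectF.1 (choice_mem_rect hAB hoT)).1
        show c.1 ∈ o.2.1
        have hcc : c.1 = o.1.1 := h1
        rw [hcc]; exact this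
      have := hH o hoT hob hcm
      exact h3 (by rw [this])
  have hforce_in : ∀ z : SVert n, EB T (rectF M) z xhat →
      ∃ o, ColStep T o z xhat ∧ rectF o ⊆ rectF M := by
    intro z hz
    rcases step_dichotomy hAB hz with ⟨⟨o, ho, hob⟩, _, _⟩ | ⟨h, _, _⟩
    swap
    · exact h
    · exfalso
      obtain ⟨hoT, _, h1, h2, h3, _, _⟩ := ho
      have hcm : c ∈ rectF o := by
        refine mem_rectF.2 ⟨h1, ?_⟩
        have := (mem_rectF.1 (choice_mem_rect hAB hoT)).2
        show c.2 ∈ o.2.2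
        have hcc : c.2 = o.1.2 := h3
        rw [hcc]; exact this
      have := hH o hoT hob hcm
      exact h2 (by rw [this])
  -- rebound walk and rotation at xhat
  have hwreb : RWalk (EB T (rectF M)) x₀ x₀ := w.transfer hWE
  obtain ⟨w₁, w₂, _, _, _, hlensum⟩ := split_first (w.transfer hWE) xhat
    ((mem_transfer w hWE xhat).2 hMmem)
  have hlenw' : 1 ≤ (w₂.append w₁).length := by
    rw [length_append, length_transfer] at *
    omega
  rcases hww' : w₂.append w₁ with _ | @⟨xhat', y₁, xhat'', e, rest⟩
  · rw [hww'] at hlenw'; simp [RWalk.length] at hlenw'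
  · obtain ⟨oe, hoe, _⟩ := hforce_out y₁ e
    have hoec : oe.1 = c := by rw [← hoe.2.1]
    have hy11 : y₁.1.1 ≠ c.1 := by
      have := hoe.2.2.2.1
      rw [hoec] at this
      exact this
    have hy12 : y₁.1.2 = c.2 := by
      have := hoe.2.2.2.2.1
      rw [hoec] at this
      exact this
    have hy2 : y₁.2 ≠ some false := rOK_ne_false hoe.2.2.2.2.2.2
    -- split rest at the first return to xhat
    obtain ⟨rest₁, rest₂, _, _, hni, _⟩ := split_first rest xhat rest.mem_right
    by_cases hrl : 1 ≤ rest₁.length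
    swap
    · have : y₁ = xhat := eq_of_length_zero rest₁ (by omega)
      rw [this] at hy11
      exact hy11 rfl
    obtain ⟨zhat, core, e', _, _, _, _, _, hnimem, _⟩ := snoc_decomp (x := xhat) rest₁ hrl
    obtain ⟨oz, hoz, _⟩ := hforce_in zhat e'
    have hozc : oz.1 = c := by rw [← hoz.2.1]
    have hz11 : zhat.1.1 = c.1 := by
      have := hoz.2.2.1
      rw [hozc] at this
      exact this
    have hz2 : zhat.2 ≠ some true := cOK_ne_true hoz.2.2.2.2.2.1
    have hvisit := inv2 hAB huniq core.length hH core le_rfl hy12 hy2 hz11 hz2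
    exact hnimem hni _ hvisit rfl

end SplitRP
namespace SplitRP

variable {n : ℕ} {T : Finset (Obs n)}

lemma valid_of_rOK {v : SVert n} (h : rOK T v.1 v.2) :
    ValidVert (crossingChoices T) v := by
  rcases h with ⟨ht, hm⟩ | ⟨ht, hm⟩
  · exact Or.inr ⟨by rw [ht]; simp, hm⟩
  · exact Or.inl ⟨ht, hm⟩

lemma valid_of_cOK {v : SVert n} (h : cOK T v.1 v.2) :
    ValidVert (crossingChoices T) v := by
  rcases h with ⟨ht, hm⟩ | ⟨ht, hm⟩
  · exact Or.inr ⟨by rw [ht]; simp, hm⟩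
  · exact Or.inl ⟨ht, hm⟩

lemma exists_rOK (p : Fin n × Fin n) : ∃ t : Option Bool, rOK T p t ∧ t ≠ some false := by
  classical
  by_cases h : p ∈ crossingChoices T
  · exact ⟨some true, Or.inl ⟨rfl, h⟩, by simp⟩
  · exact ⟨none, Or.inr ⟨rfl, h⟩, by simp⟩

lemma exists_cOK (p : Fin n × Fin n) : ∃ t : Option Bool, cOK T p t ∧ t ≠ some true := by
  classical
  by_cases h : p ∈ crossingChoices T
  · exact ⟨some false, Or.inl ⟨rfl, h⟩, by simp⟩
  · exact ⟨none, Or.inr ⟨rfl, h⟩, by simp⟩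

lemma isSplitRPGraph_EB : IsSplitRPGraph (crossingChoices T) (EB T Finset.univ) := by
  rintro v w ⟨o, ho | ho, _⟩
  · obtain ⟨hoT, hv, hwI, hwne, hwj, hrv, hrw⟩ := ho
    refine ⟨valid_of_rOK hrv, valid_of_rOK hrw, Or.inl ⟨?_, ?_, rOK_ne_false hrv,
      rOK_ne_false hrw⟩⟩
    · rw [hv, hwj]
    · rw [hv]; exact fun hh => hwne hh.symm
  · obtain ⟨hoT, hw, hvi, hvJ, hvne, hcv, hcw⟩ := ho
    refine ⟨valid_of_cOK hcv, valid_of_cOK hcw, Or.inr ⟨?_, ?_, cOK_ne_true hcv,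
      cOK_ne_true hcw⟩⟩
    · rw [hw, hvi]
    · rw [hw]; exact hvne

lemma implements_EB : SplitImplements (EB T Finset.univ) T := by
  intro o hoT
  constructor
  · intro i' hi' hne
    obtain ⟨t, hrt, htf⟩ := exists_rOK (T := T) o.1
    obtain ⟨t', hrt', htf'⟩ := exists_rOK (T := T) (i', o.1.2)
    exact ⟨t, t', htf, htf',
      ⟨o, Or.inl ⟨hoT, rfl, hi', hne, rfl, hrt, hrt'⟩, Finset.subset_univ _⟩⟩
  · intro j' hj' hne
    obtain ⟨t, hct, htt⟩ := exists_cOK (T := T) (o.1.1, j')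
    obtain ⟨t', hct', htt'⟩ := exists_cOK (T := T) o.1
    exact ⟨t, t', htt, htt',
      ⟨o, Or.inr ⟨hoT, rfl, rfl, hj', hne, hct, hct'⟩, Finset.subset_univ _⟩⟩

end SplitRP

/-- If `T` is a rationalizable data set satisfying the uniqueness
property, then there exists an acyclic split revealed-preference graph, whose split set
is the set of observed choices of crossing subgames of `T`, that implements `T`. -/
theorem acyclic_split_rp_graph_exists (n : ℕ) (T : Finset (Obs n)) (hT : IsDataset T)
    (hrat : Rationalizable T) (huniq : UniqueProp T) :
    ∃ G : SVert n → SVert n → Prop,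
      IsSplitRPGraph (crossingChoices T) G ∧ Acyclic G ∧ SplitImplements G T := by
  obtain ⟨A, B, hAB⟩ := hrat
  exact ⟨SplitRP.EB T Finset.univ, SplitRP.isSplitRPGraph_EB,
    SplitRP.acyclic_EB hAB huniq, SplitRP.implements_EB⟩
end

section
/- Consider the data set T = { ((1,1),{1,2},{1,2}), ((2,2),{1,2},{1,2}) } over a 2 × 2 strategy space. Then T is rationalizable by a bimatrix game (A,B) with rank(A+B) = 1, but T is not rationalizable by any zero-sum game (A,−A). -/
/-- The data set `T = { ((1,1),{1,2},{1,2}), ((2,2),{1,2},{1,2}) }` over a `2 × 2`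
strategy space (in 0-based `Fin 2` indexing, `{1,2} = Finset.univ`). -/
def diagDataset : Finset (Obs 2) :=
  {((0, 0), Finset.univ, Finset.univ), ((1, 1), Finset.univ, Finset.univ)}

/-- The data set `{ ((1,1),{1,2},{1,2}), ((2,2),{1,2},{1,2}) }` is
rationalizable by a bimatrix game `(A,B)` with `rank (A+B) = 1`, but is not
rationalizable by any zero-sum game `(A,-A)`. -/
theorem diag_dataset_rank_one_not_zero_sum :
    (∃ A B : Matrix (Fin 2) (Fin 2) ℝ, Rationalizes A B diagDataset ∧ (A + B).rank = 1) ∧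
    ∀ A : Matrix (Fin 2) (Fin 2) ℝ, ¬ Rationalizes A (-A) diagDataset := by
  constructor
  · refine ⟨!![9, 0; 7, 5], !![1, 0; -7, -5], ?_, ?_⟩
    · intro o ho
      simp only [diagDataset, Finset.mem_insert, Finset.mem_singleton] at ho
      rcases ho with rfl | rfl <;>
      · refine ⟨Finset.mem_univ _, Finset.mem_univ _, ?_, ?_⟩ <;>
        · intro x _ hx
          fin_cases x <;> simp_all <;> norm_num
    · have h : !![(9:ℝ), 0; 7, 5] + !![1, 0; -7, -5] = Matrix.diagonal ![10, 0] := by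
        ext i j; fin_cases i <;> fin_cases j <;> simp [Matrix.diagonal] <;> norm_num
      rw [h, Matrix.rank_diagonal]
      rw [Fintype.card_eq_one_iff]
      refine ⟨⟨0, by norm_num⟩, ?_⟩
      rintro ⟨i, hi⟩
      fin_cases i
      · rfl
      · exact absurd (by norm_num : ¬ ![(10:ℝ),0] 1 ≠ 0) (fun h => h hi)
  · intro A hA
    have h1 := hA ((0, 0), Finset.univ, Finset.univ) (by simp [diagDataset])
    have h2 := hA ((1, 1), Finset.univ, Finset.univ) (by simp [diagDataset])
    obtain ⟨-, -, ha1, hb1⟩ := h1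
    obtain ⟨-, -, ha2, hb2⟩ := h2
    have c1 := ha1 1 (Finset.mem_univ _) (by decide)
    have c2 := hb1 1 (Finset.mem_univ _) (by decide)
    have c3 := ha2 0 (Finset.mem_univ _) (by decide)
    have c4 := hb2 0 (Finset.mem_univ _) (by decide)
    simp only [Matrix.neg_apply] at c2 c4
    linarith
end
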